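/- arXiv:1912.02953 — 7 statements merged into one kernel-verified Lean document; each statement's English description precedes it below -/
import Mathlib

section
/- In the triangular grid under rule 12: if c is a configuration with at least one active cell, u is a cell, and d ≥ 2 is the distance from u to the nearest active cell of c, then the distance from u to the nearest active cell of F(c) equals d − 1. -/
/-- Neighbors in the triangular grid: cell `(i,j)` is adjacent to `(i-1,j)`,
`(i+1,j)`, and `(i,j-1)` if `i+j` is even, `(i,j+1)` if `i+j` is odd. -/
def triNbrs (p : ℤ × ℤ) : Finset (ℤ × ℤ) :=
  {(p.1 - 1, p.2), (p.1 + 1, p.2),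
   (p.1, if Even (p.1 + p.2) then p.2 - 1 else p.2 + 1)}

/-- Number of active neighbors of `p` in configuration `c`. -/
def triActCount (c : ℤ × ℤ → Bool) (p : ℤ × ℤ) : ℕ :=
  ((triNbrs p).filter (fun q => c q = true)).card

/-- The freezing totalistic rule on the triangular grid with activating set `I`:
active cells stay active, an inactive cell becomes active iff its number of
active neighbors lies in `I`. -/
def ruleT (I : Finset ℕ) (c : ℤ × ℤ → Bool) : ℤ × ℤ → Bool :=
  fun p => c p || decide (triActCount c p ∈ I)

/-- `triStepsTo n p q` : there is a walk of length `n` from `p` to `q` in the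
triangular grid. -/
def triStepsTo : ℕ → ℤ × ℤ → ℤ × ℤ → Prop
  | 0, p, q => p = q
  | n + 1, p, q => ∃ r ∈ triNbrs p, triStepsTo n r q

/-- Graph distance in the triangular grid. -/
noncomputable def triDist (p q : ℤ × ℤ) : ℕ := sInf {n | triStepsTo n p q}

/-- Distance from `u` to the nearest active cell of `c`. -/
noncomputable def triDistToActive (c : ℤ × ℤ → Bool) (u : ℤ × ℤ) : ℕ :=
  sInf {d | ∃ v, c v = true ∧ triDist u v = d}

lemma triNbrs_symm {p q : ℤ × ℤ} (h : q ∈ triNbrs p) : p ∈ triNbrs q := by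
  simp only [triNbrs, Finset.mem_insert, Finset.mem_singleton, Prod.ext_iff] at h ⊢
  obtain ⟨a, b⟩ := p
  obtain ⟨x, y⟩ := q
  simp only [Int.even_iff] at h ⊢
  rcases h with ⟨h1, h2⟩ | ⟨h1, h2⟩ | ⟨h1, h2⟩ <;> subst h1 <;> subst h2 <;>
    split_ifs <;> omega

lemma triNbrs_card_le (p : ℤ × ℤ) : (triNbrs p).card ≤ 3 := by
  unfold triNbrs
  refine le_trans (Finset.card_insert_le _ _) (Nat.succ_le_succ ?_)
  refine le_trans (Finset.card_insert_le _ _) (Nat.succ_le_succ ?_)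
  simp

lemma steps_snoc : ∀ (n : ℕ) (p q : ℤ × ℤ), triStepsTo (n + 1) p q →
    ∃ r, triStepsTo n p r ∧ q ∈ triNbrs r := by
  intro n
  induction n with
  | zero =>
    intro p q h
    obtain ⟨r, hr, he⟩ := h
    exact ⟨p, rfl, he ▸ hr⟩
  | succ n ih =>
    intro p q h
    obtain ⟨r, hr, hs⟩ := h
    obtain ⟨s, hs1, hs2⟩ := ih r q hs
    exact ⟨s, ⟨r, hr, hs1⟩, hs2⟩

lemma steps_append : ∀ (n : ℕ) (p r q : ℤ × ℤ), triStepsTo n p r → q ∈ triNbrs r →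
    triStepsTo (n + 1) p q := by
  intro n
  induction n with
  | zero =>
    intro p r q h hq
    exact ⟨q, h ▸ hq, rfl⟩
  | succ n ih =>
    intro p r q h hq
    obtain ⟨s, hs, hst⟩ := h
    exact ⟨s, hs, ih s r q hst hq⟩

lemma triDist_le {n : ℕ} {p q : ℤ × ℤ} (h : triStepsTo n p q) : triDist p q ≤ n :=
  Nat.sInf_le h

/-- under rule 12 on the triangular grid, if the nearest active
cell is at distance `d ≥ 2` from `u`, then after one step the nearest active
cell is at distance `d - 1`. -/
theorem stmt1 (c : ℤ × ℤ → Bool) (u : ℤ × ℤ) (d : ℕ)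
    (hact : ∃ v, c v = true) (hd2 : 2 ≤ d)
    (hd : triDistToActive c u = d) :
    triDistToActive (ruleT {1, 2} c) u = d - 1 := by
  -- old distance set
  set A : Set ℕ := {e | ∃ v, c v = true ∧ triDist u v = e} with hA
  have hAne : A.Nonempty := by
    obtain ⟨v, hv⟩ := hact
    exact ⟨triDist u v, v, hv, rfl⟩
  have hdmem : d ∈ A := hd ▸ Nat.sInf_mem hAne
  have hAlb : ∀ e ∈ A, d ≤ e := fun e he => hd ▸ Nat.sInf_le he
  -- every c-active cell is at triDist ≥ d from u
  have hactive_far : ∀ w, c w = true → d ≤ triDist u w := fun w hw =>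
    hAlb _ ⟨w, hw, rfl⟩
  -- get nearest active v with a geodesic walk
  obtain ⟨v, hv, hvd⟩ := hdmem
  have hwalkset : {n | triStepsTo n u v}.Nonempty := by
    by_contra hempty
    rw [Set.not_nonempty_iff_eq_empty] at hempty
    have : triDist u v = 0 := by rw [triDist, hempty, Nat.sInf_empty]
    omega
  have hwalk : triStepsTo d u v := by
    have := Nat.sInf_mem hwalkset
    rwa [show sInf {n | triStepsTo n u v} = d from hvd] at this
  -- decompose the walk: u → s (d-2 steps) → r → v
  obtain ⟨d2, hd2eq⟩ : ∃ d2, d = d2 + 2 := ⟨d - 2, by omega⟩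
  subst hd2eq
  obtain ⟨r, hur, hvr⟩ := steps_snoc (d2 + 1) u v hwalk
  obtain ⟨s, hus, hrs⟩ := steps_snoc d2 u r hur
  have hsr : s ∈ triNbrs r := triNbrs_symm hrs
  -- s and r are inactive in c
  have hcr : c r = false := by
    by_contra h
    have : c r = true := by simpa using h
    have := hactive_far r this
    have := triDist_le hur
    omega
  have hcs : c s = false := by
    by_contra h
    have : c s = true := by simpa using h
    have := hactive_far s this
    have := triDist_le hus
    omega
  -- r becomes active: count ∈ {1,2}
  have hcount1 : 1 ≤ triActCount c r := by
    have : v ∈ (triNbrs r).filter (fun q => c q = true) :=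
      Finset.mem_filter.mpr ⟨hvr, hv⟩
    exact Finset.card_pos.mpr ⟨v, this⟩
  have hcount2 : triActCount c r ≤ 2 := by
    have hsub : (triNbrs r).filter (fun q => c q = true) ⊆ (triNbrs r).erase s := by
      intro x hx
      rw [Finset.mem_filter] at hx
      refine Finset.mem_erase.mpr ⟨?_, hx.1⟩
      rintro rfl
      rw [hcs] at hx
      simp at hx
    have h1 := Finset.card_le_card hsub
    rw [Finset.card_erase_of_mem hsr] at h1
    have := triNbrs_card_le r
    unfold triActCount
    omega
  have hFr : ruleT {1, 2} c r = true := by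
    unfold ruleT
    simp only [Bool.or_eq_true, decide_eq_true_eq]
    right
    simp only [Finset.mem_insert, Finset.mem_singleton]
    omega
  -- new distance set
  set B : Set ℕ := {e | ∃ w, ruleT {1, 2} c w = true ∧ triDist u w = e} with hB
  have hBne : B.Nonempty := ⟨triDist u r, r, hFr, rfl⟩
  -- upper bound
  have hub : sInf B ≤ d2 + 1 :=
    le_trans (Nat.sInf_le ⟨r, hFr, rfl⟩) (triDist_le hur)
  -- lower bound
  have hlb : ∀ e ∈ B, d2 + 1 ≤ e := by
    rintro e ⟨w, hw, rfl⟩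
    unfold ruleT at hw
    simp only [Bool.or_eq_true, decide_eq_true_eq] at hw
    rcases hw with hw | hw
    · have := hactive_far w hw; omega
    · -- some neighbor x of w is active
      have hpos : 0 < triActCount c w := by
        simp only [Finset.mem_insert, Finset.mem_singleton] at hw
        omega
      obtain ⟨x, hx⟩ := Finset.card_pos.mp hpos
      rw [Finset.mem_filter] at hx
      have hxfar : d2 + 2 ≤ triDist u x := hactive_far x hx.2
      -- walk set for w nonempty
      have hwne : {n | triStepsTo n u w}.Nonempty := by
        by_contra hempty
        rw [Set.not_nonempty_iff_eq_empty] at hempty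
        -- then there is no walk to x either
        have hxe : {n | triStepsTo n u x} = ∅ := by
          rw [Set.eq_empty_iff_forall_notMem]
          intro n hn
          have hwmem : triStepsTo (n + 1) u w :=
            steps_append n u x w hn (triNbrs_symm hx.1)
          have : (n + 1) ∈ {n | triStepsTo n u w} := hwmem
          rw [hempty] at this
          exact this
        have : triDist u x = 0 := by rw [triDist, hxe, Nat.sInf_empty]
        omega
      obtain ⟨m, hm⟩ := hwne
      have hmin : triStepsTo (triDist u w) u w := by
        have := Nat.sInf_mem ⟨m, hm⟩
        exact this
      have : triStepsTo (triDist u w + 1) u x :=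
        steps_append _ u w x hmin hx.1
      have := triDist_le this
      omega
  exact le_antisymm hub (le_csInf hBne hlb)
end

section
/- In the triangular grid under rule 12: let c be a configuration with at least one active cell, u a cell with c_u = 0, and τ ≥ 2 the distance from u to the nearest active cell of c. Then u is stable for c if and only if for each of the three neighbors v of u the set S_v ∩ D_τ(u) contains a cell active in c; moreover, if u is not stable then F^τ(c)_u = 1. -/
/-- The semi-plane `S_v` determined by a cell `u` and a neighbor `v` of `u`:
the set of cells whose triangles lie on the same side as `v` of the straight
line containing the common edge of the triangles `u` and `v` (expressed
combinatorially in the `(i,j)` encoding of the triangular grid). -/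
def semiPlane (u v : ℤ × ℤ) : Set (ℤ × ℤ) :=
  if v = (u.1, u.2 - 1) then {w | w.2 < u.2}
  else if v = (u.1, u.2 + 1) then {w | u.2 < w.2}
  else if v = (u.1 + 1, u.2) then
    (if Even (u.1 + u.2) then {w | u.1 + u.2 < w.1 + w.2}
     else {w | u.1 - u.2 < w.1 - w.2})
  else
    (if Even (u.1 + u.2) then {w | u.2 - u.1 < w.2 - w.1}
     else {w | w.1 + w.2 < u.1 + u.2})


/-- A cell `u` is stable for configuration `c` under an automaton `F` if it is
inactive and remains inactive at all times. -/
def isStable (F : (ℤ × ℤ → Bool) → (ℤ × ℤ → Bool)) (c : ℤ × ℤ → Bool)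
    (u : ℤ × ℤ) : Prop :=
  c u = false ∧ ∀ t : ℕ, F^[t] c u = false

namespace TriAux

/-- First auxiliary coordinate. -/
def aco (i j : ℤ) : ℤ := (i + j + 1) / 2
/-- Second auxiliary coordinate. -/
def bco (i j : ℤ) : ℤ := (i - j) / 2

/-- Closed-form graph distance on the triangular grid. -/
def triD : ℤ × ℤ → ℤ × ℤ → ℕ
  | (i, j), (k, l) =>
    (aco i j - aco k l).natAbs + (bco i j - bco k l).natAbs + (l - j).natAbs

lemma shift_even {i j : ℤ} (h : (i + j) % 2 = 0) :
    aco (i-1) j = aco i j ∧ bco (i-1) j = bco i j - 1 ∧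
    aco (i+1) j = aco i j + 1 ∧ bco (i+1) j = bco i j ∧
    aco i (j-1) = aco i j ∧ bco i (j-1) = bco i j := by
  unfold aco bco; omega

lemma shift_odd {i j : ℤ} (h : (i + j) % 2 = 1) :
    aco (i-1) j = aco i j - 1 ∧ bco (i-1) j = bco i j ∧
    aco (i+1) j = aco i j ∧ bco (i+1) j = bco i j + 1 ∧
    aco i (j+1) = aco i j ∧ bco i (j+1) = bco i j := by
  unfold aco bco; omega

lemma coords_even {i j : ℤ} (h : (i + j) % 2 = 0) :
    2 * aco i j = i + j ∧ 2 * bco i j = i - j := by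
  unfold aco bco; omega

lemma coords_odd {i j : ℤ} (h : (i + j) % 2 = 1) :
    2 * aco i j = i + j + 1 ∧ 2 * bco i j = i - j - 1 := by
  unfold aco bco; omega

lemma coords_gen (k l : ℤ) :
    (2 * aco k l = k + l ∧ 2 * bco k l = k - l) ∨
    (2 * aco k l = k + l + 1 ∧ 2 * bco k l = k - l - 1) := by
  unfold aco bco; omega

lemma triNbrs_even {i j : ℤ} (h : (i + j) % 2 = 0) :
    triNbrs (i, j) = {(i - 1, j), (i + 1, j), (i, j - 1)} := by
  simp only [triNbrs]
  norm_num [Int.even_iff, h]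

lemma triNbrs_odd {i j : ℤ} (h : (i + j) % 2 = 1) :
    triNbrs (i, j) = {(i - 1, j), (i + 1, j), (i, j + 1)} := by
  simp only [triNbrs]
  norm_num [Int.even_iff, h]

lemma mem_pair_iff {x a b : ℤ × ℤ} : x ∈ ({a, b} : Finset (ℤ × ℤ)) ↔ x = a ∨ x = b := by
  simp

lemma mem_triple_iff {x a b d : ℤ × ℤ} :
    x ∈ ({a, b, d} : Finset (ℤ × ℤ)) ↔ x = a ∨ x = b ∨ x = d := by
  simp

lemma triNbrs_symm {p r : ℤ × ℤ} (h : r ∈ triNbrs p) : p ∈ triNbrs r := by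
  obtain ⟨i, j⟩ := p
  rcases Int.emod_two_eq (i + j) with hp | hp
  · rw [triNbrs_even hp, mem_triple_iff] at h
    rcases h with h | h | h <;> subst h
    · rw [triNbrs_odd (by omega), mem_triple_iff]
      right; left; rw [Prod.mk.injEq]; omega
    · rw [triNbrs_odd (by omega), mem_triple_iff]
      left; rw [Prod.mk.injEq]; omega
    · rw [triNbrs_odd (by omega), mem_triple_iff]
      right; right; rw [Prod.mk.injEq]; omega
  · rw [triNbrs_odd hp, mem_triple_iff] at h
    rcases h with h | h | h <;> subst h
    · rw [triNbrs_even (by omega), mem_triple_iff]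
      right; left; rw [Prod.mk.injEq]; omega
    · rw [triNbrs_even (by omega), mem_triple_iff]
      left; rw [Prod.mk.injEq]; omega
    · rw [triNbrs_even (by omega), mem_triple_iff]
      right; right; rw [Prod.mk.injEq]; omega

lemma triD_self (p : ℤ × ℤ) : triD p p = 0 := by
  obtain ⟨i, j⟩ := p; simp [triD]

lemma triD_eq_zero {p q : ℤ × ℤ} (h : triD p q = 0) : p = q := by
  obtain ⟨i, j⟩ := p; obtain ⟨k, l⟩ := q
  simp only [triD] at h
  have h1 := coords_gen i j
  have h2 := coords_gen k l
  rw [Prod.mk.injEq]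
  omega

lemma triD_lip {p r : ℤ × ℤ} (h : r ∈ triNbrs p) (q : ℤ × ℤ) :
    triD p q ≤ triD r q + 1 ∧ triD r q ≤ triD p q + 1 := by
  obtain ⟨i, j⟩ := p; obtain ⟨k, l⟩ := q
  rcases Int.emod_two_eq (i + j) with hp | hp
  · rw [triNbrs_even hp, mem_triple_iff] at h
    obtain ⟨h1, h2, h3, h4, h5, h6⟩ := shift_even hp
    rcases h with h | h | h <;> subst h <;>
      simp only [triD, h1, h2, h3, h4, h5, h6] <;> omega
  · rw [triNbrs_odd hp, mem_triple_iff] at h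
    obtain ⟨h1, h2, h3, h4, h5, h6⟩ := shift_odd hp
    rcases h with h | h | h <;> subst h <;>
      simp only [triD, h1, h2, h3, h4, h5, h6] <;> omega

lemma triD_descent {p q : ℤ × ℤ} {n : ℕ} (h : triD p q = n + 1) :
    ∃ r ∈ triNbrs p, triD r q = n := by
  obtain ⟨i, j⟩ := p; obtain ⟨k, l⟩ := q
  rcases Int.emod_two_eq (i + j) with hp | hp
  · obtain ⟨h1, h2, h3, h4, h5, h6⟩ := shift_even hp
    rw [triNbrs_even hp]
    by_cases c1 : aco i j < aco k l
    · refine ⟨_, mem_triple_iff.2 (Or.inr (Or.inl rfl)), ?_⟩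
      simp only [triD, h3, h4] at h ⊢; omega
    · by_cases c2 : bco k l < bco i j
      · refine ⟨_, mem_triple_iff.2 (Or.inl rfl), ?_⟩
        simp only [triD, h1, h2] at h ⊢; omega
      · by_cases c3 : l < j
        · refine ⟨_, mem_triple_iff.2 (Or.inr (Or.inr rfl)), ?_⟩
          simp only [triD, h5, h6] at h ⊢; omega
        · exfalso
          have hu := coords_even hp
          have hw := coords_gen k l
          simp only [triD] at h
          omega
  · obtain ⟨h1, h2, h3, h4, h5, h6⟩ := shift_odd hp
    rw [triNbrs_odd hp]
    by_cases c1 : aco k l < aco i j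
    · refine ⟨_, mem_triple_iff.2 (Or.inl rfl), ?_⟩
      simp only [triD, h1, h2] at h ⊢; omega
    · by_cases c2 : bco i j < bco k l
      · refine ⟨_, mem_triple_iff.2 (Or.inr (Or.inl rfl)), ?_⟩
        simp only [triD, h3, h4] at h ⊢; omega
      · by_cases c3 : j < l
        · refine ⟨_, mem_triple_iff.2 (Or.inr (Or.inr rfl)), ?_⟩
          simp only [triD, h5, h6] at h ⊢; omega
        · exfalso
          have hu := coords_odd hp
          have hw := coords_gen k l
          simp only [triD] at h
          omega

lemma stepsTo_ge_triD : ∀ (n : ℕ) (p q : ℤ × ℤ), triStepsTo n p q → triD p q ≤ n := by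
  intro n
  induction n with
  | zero => intro p q h; rw [show p = q from h, triD_self]
  | succ n ih =>
    rintro p q ⟨r, hr, hs⟩
    have := (triD_lip hr q).1
    have := ih r q hs
    omega

lemma triD_stepsTo : ∀ (n : ℕ) (p q : ℤ × ℤ), triD p q = n → triStepsTo n p q := by
  intro n
  induction n with
  | zero => intro p q h; exact triD_eq_zero h
  | succ n ih =>
    intro p q h
    obtain ⟨r, hr, hD⟩ := triD_descent h
    exact ⟨r, hr, ih r q hD⟩

lemma triDist_eq_triD (p q : ℤ × ℤ) : triDist p q = triD p q := by
  have hmem : triD p q ∈ {n | triStepsTo n p q} := triD_stepsTo _ _ _ rfl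
  refine le_antisymm (Nat.sInf_le hmem) ?_
  exact stepsTo_ge_triD _ _ _ (Nat.sInf_mem ⟨_, hmem⟩)

end TriAux

namespace TriAux

lemma semiPlane_down (i j : ℤ) : semiPlane (i, j) (i, j - 1) = {w | w.2 < j} := by
  simp only [semiPlane]
  rw [if_pos trivial]

lemma semiPlane_up (i j : ℤ) : semiPlane (i, j) (i, j + 1) = {w | j < w.2} := by
  simp only [semiPlane]
  rw [if_neg (by rw [Prod.mk.injEq]; omega), if_pos trivial]

lemma semiPlane_right_even {i j : ℤ} (h : (i + j) % 2 = 0) :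
    semiPlane (i, j) (i + 1, j) = {w | i + j < w.1 + w.2} := by
  simp only [semiPlane]
  rw [if_neg (by rw [Prod.mk.injEq]; omega), if_neg (by rw [Prod.mk.injEq]; omega),
    if_pos trivial, if_pos (Int.even_iff.2 h)]

lemma semiPlane_right_odd {i j : ℤ} (h : (i + j) % 2 = 1) :
    semiPlane (i, j) (i + 1, j) = {w | i - j < w.1 - w.2} := by
  simp only [semiPlane]
  rw [if_neg (by rw [Prod.mk.injEq]; omega), if_neg (by rw [Prod.mk.injEq]; omega),
    if_pos trivial, if_neg (by rw [Int.even_iff]; omega)]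

lemma semiPlane_left_even {i j : ℤ} (h : (i + j) % 2 = 0) :
    semiPlane (i, j) (i - 1, j) = {w | j - i < w.2 - w.1} := by
  simp only [semiPlane]
  rw [if_neg (by rw [Prod.mk.injEq]; omega), if_neg (by rw [Prod.mk.injEq]; omega),
    if_neg (by rw [Prod.mk.injEq]; omega), if_pos (Int.even_iff.2 h)]

lemma semiPlane_left_odd {i j : ℤ} (h : (i + j) % 2 = 1) :
    semiPlane (i, j) (i - 1, j) = {w | w.1 + w.2 < i + j} := by
  simp only [semiPlane]
  rw [if_neg (by rw [Prod.mk.injEq]; omega), if_neg (by rw [Prod.mk.injEq]; omega),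
    if_neg (by rw [Prod.mk.injEq]; omega), if_neg (by rw [Int.even_iff]; omega)]

/-- Key geometric lemma: for a neighbour `v` of `u` and `w` at distance at least 2
from `u`, `w` lies in the semi-plane of `v` iff `v` is one step closer to `w`. -/
lemma geo {u v w : ℤ × ℤ} (hv : v ∈ triNbrs u) (h2 : 2 ≤ triD u w) :
    w ∈ semiPlane u v ↔ triD v w + 1 = triD u w := by
  obtain ⟨i, j⟩ := u; obtain ⟨k, l⟩ := w
  rcases Int.emod_two_eq (i + j) with hp | hp
  · obtain ⟨h1, h2', h3, h4, h5, h6⟩ := shift_even hp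
    have hu := coords_even hp
    have hw := coords_gen k l
    rw [triNbrs_even hp, mem_triple_iff] at hv
    rcases hv with hv | hv | hv <;> subst hv
    · rw [semiPlane_left_even hp, Set.mem_setOf_eq]
      simp only [triD, h1, h2'] at h2 ⊢
      omega
    · rw [semiPlane_right_even hp, Set.mem_setOf_eq]
      simp only [triD, h3, h4] at h2 ⊢
      omega
    · rw [semiPlane_down, Set.mem_setOf_eq]
      simp only [triD, h5, h6] at h2 ⊢
      omega
  · obtain ⟨h1, h2', h3, h4, h5, h6⟩ := shift_odd hp
    have hu := coords_odd hp
    have hw := coords_gen k l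
    rw [triNbrs_odd hp, mem_triple_iff] at hv
    rcases hv with hv | hv | hv <;> subst hv
    · rw [semiPlane_left_odd hp, Set.mem_setOf_eq]
      simp only [triD, h1, h2'] at h2 ⊢
      omega
    · rw [semiPlane_right_odd hp, Set.mem_setOf_eq]
      simp only [triD, h3, h4] at h2 ⊢
      omega
    · rw [semiPlane_up, Set.mem_setOf_eq]
      simp only [triD, h5, h6] at h2 ⊢
      omega

end TriAux

namespace TriAux

lemma triNbrs_card (p : ℤ × ℤ) : (triNbrs p).card = 3 := by
  obtain ⟨i, j⟩ := p
  rcases Int.emod_two_eq (i + j) with hp | hp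
  · rw [triNbrs_even hp]
    rw [Finset.card_insert_of_notMem (by simp only [mem_pair_iff, Prod.mk.injEq]; omega),
      Finset.card_insert_of_notMem (by simp only [Finset.mem_singleton, Prod.mk.injEq]; omega),
      Finset.card_singleton]
  · rw [triNbrs_odd hp]
    rw [Finset.card_insert_of_notMem (by simp only [mem_pair_iff, Prod.mk.injEq]; omega),
      Finset.card_insert_of_notMem (by simp only [Finset.mem_singleton, Prod.mk.injEq]; omega),
      Finset.card_singleton]

lemma triActCount_le (c' : ℤ × ℤ → Bool) (p : ℤ × ℤ) : triActCount c' p ≤ 3 :=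
  le_trans (Finset.card_filter_le _ _) (le_of_eq (triNbrs_card p))

lemma triActCount_pos_iff {c' : ℤ × ℤ → Bool} {p : ℤ × ℤ} :
    0 < triActCount c' p ↔ ∃ r ∈ triNbrs p, c' r = true := by
  unfold triActCount
  rw [Finset.card_pos, Finset.filter_nonempty_iff]

lemma triActCount_eq_three_iff {c' : ℤ × ℤ → Bool} {p : ℤ × ℤ} :
    triActCount c' p = 3 ↔ ∀ r ∈ triNbrs p, c' r = true := by
  constructor
  · intro h r hr
    have heq := Finset.eq_of_subset_of_card_le
      (Finset.filter_subset (fun q => c' q = true) (triNbrs p))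
      (by unfold triActCount at h; rw [h, triNbrs_card])
    have : r ∈ (triNbrs p).filter (fun q => c' q = true) := by rw [heq]; exact hr
    exact (Finset.mem_filter.1 this).2
  · intro h
    unfold triActCount
    rw [Finset.filter_true_of_mem h, triNbrs_card]

lemma persist {I : Finset ℕ} {c : ℤ × ℤ → Bool} {w : ℤ × ℤ} {s t : ℕ} (h : s ≤ t)
    (ha : (ruleT I)^[s] c w = true) : (ruleT I)^[t] c w = true := by
  obtain ⟨k, rfl⟩ := Nat.exists_eq_add_of_le h
  clear h
  induction k with
  | zero => exact ha
  | succ k ih =>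
    rw [show s + (k + 1) = (s + k) + 1 from rfl, Function.iterate_succ_apply']
    simp only [ruleT, Bool.or_eq_true]
    exact Or.inl ih

variable {c : ℤ × ℤ → Bool}

lemma dA_le {v : ℤ × ℤ} (h : c v = true) (u : ℤ × ℤ) :
    triDistToActive c u ≤ triD u v :=
  Nat.sInf_le ⟨v, h, triDist_eq_triD u v⟩

lemma dA_spec (hact : ∃ v, c v = true) (u : ℤ × ℤ) :
    ∃ v, c v = true ∧ triD u v = triDistToActive c u := by
  obtain ⟨v0, hv0⟩ := hact
  obtain ⟨v, hv, hd⟩ := Nat.sInf_mem (⟨_, v0, hv0, rfl⟩ :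
    Set.Nonempty {d | ∃ v, c v = true ∧ triDist u v = d})
  exact ⟨v, hv, by rw [← triDist_eq_triD]; exact hd⟩

lemma dA_zero_of_active {u : ℤ × ℤ} (h : c u = true) : triDistToActive c u = 0 :=
  Nat.le_zero.1 (by simpa [triD_self] using dA_le h u)

lemma active_of_dA_zero (hact : ∃ v, c v = true) {u : ℤ × ℤ}
    (h : triDistToActive c u = 0) : c u = true := by
  obtain ⟨v, hv, hd⟩ := dA_spec hact u
  rw [h] at hd
  rwa [triD_eq_zero hd]

lemma dA_lip (hact : ∃ v, c v = true) {u r : ℤ × ℤ} (hr : r ∈ triNbrs u) :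
    triDistToActive c u ≤ triDistToActive c r + 1 := by
  obtain ⟨v, hv, hd⟩ := dA_spec hact r
  have h1 := dA_le hv u
  have h2 := (triD_lip hr v).1
  omega

lemma dA_descent (hact : ∃ v, c v = true) {u : ℤ × ℤ} {n : ℕ}
    (h : triDistToActive c u = n + 1) : ∃ r ∈ triNbrs u, triDistToActive c r = n := by
  obtain ⟨v, hv, hd⟩ := dA_spec hact u
  rw [h] at hd
  obtain ⟨r, hr, hDr⟩ := triD_descent hd
  have h1 : triDistToActive c r ≤ n := hDr ▸ dA_le hv r
  have h2 := dA_lip hact hr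
  exact ⟨r, hr, by omega⟩

lemma speed (hact : ∃ v, c v = true) :
    ∀ (t : ℕ) (w : ℤ × ℤ), (ruleT {1, 2})^[t] c w = true → triDistToActive c w ≤ t := by
  intro t
  induction t with
  | zero =>
    intro w h
    exact le_of_eq (dA_zero_of_active h)
  | succ t ih =>
    intro w h
    rw [Function.iterate_succ_apply'] at h
    simp only [ruleT, Bool.or_eq_true, decide_eq_true_eq] at h
    rcases h with h | h
    · exact le_trans (ih w h) (Nat.le_succ t)
    · have hpos : 0 < triActCount ((ruleT {1, 2})^[t] c) w := by
        simp only [Finset.mem_insert, Finset.mem_singleton] at h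
        omega
      obtain ⟨r, hr, hcr⟩ := triActCount_pos_iff.1 hpos
      have h1 := dA_lip hact hr
      have h2 := ih r hcr
      omega

lemma main (hact : ∃ v, c v = true) :
    ∀ (d : ℕ) (w : ℤ × ℤ), triDistToActive c w = d + 1 →
      ((∀ r ∈ triNbrs w, triDistToActive c r = d) →
        ∀ t, (ruleT {1, 2})^[t] c w = false) ∧
      ((¬ ∀ r ∈ triNbrs w, triDistToActive c r = d) →
        (ruleT {1, 2})^[d + 1] c w = true) := by
  intro d
  induction d using Nat.strong_induction_on with
  | _ d ih =>
  intro w hw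
  have hcw : c w = false := by
    by_contra h
    rw [Bool.not_eq_false] at h
    have := dA_zero_of_active h
    omega
  have hwt : ∀ t, t < d + 1 → (ruleT {1, 2})^[t] c w = false := by
    intro t ht
    by_contra h
    rw [Bool.not_eq_false] at h
    have := speed hact t w h
    omega
  have hactive : ∀ r ∈ triNbrs w, triDistToActive c r = d →
      (ruleT {1, 2})^[d] c r = true := by
    intro r hr hdr
    cases d with
    | zero => exact active_of_dA_zero hact hdr
    | succ e =>
      refine (ih e (by omega) r hdr).2 ?_
      intro hall
      have := hall w (triNbrs_symm hr)
      omega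
  have hinactive : ∀ (t : ℕ) (r : ℤ × ℤ), t < triDistToActive c r →
      (ruleT {1, 2})^[t] c r = false := by
    intro t r ht
    by_contra h
    rw [Bool.not_eq_false] at h
    have := speed hact t r h
    omega
  constructor
  · intro hall t
    induction t with
    | zero => exact hcw
    | succ t iht =>
      rw [Function.iterate_succ_apply']
      simp only [ruleT, iht, Bool.false_or]
      rw [decide_eq_false_iff_not]
      by_cases hlt : t < d
      · intro hmem
        have hpos : 0 < triActCount ((ruleT {1, 2})^[t] c) w := by
          simp only [Finset.mem_insert, Finset.mem_singleton] at hmem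
          omega
        obtain ⟨r, hr, hcr⟩ := triActCount_pos_iff.1 hpos
        rw [hinactive t r (by rw [hall r hr]; omega)] at hcr
        exact absurd hcr (by simp)
      · have h3 : triActCount ((ruleT {1, 2})^[t] c) w = 3 :=
          triActCount_eq_three_iff.2
            (fun r hr => persist (by omega) (hactive r hr (hall r hr)))
        rw [h3]
        simp
  · intro hex
    push_neg at hex
    obtain ⟨r0, hr0, hne0⟩ := hex
    have hge0 : d + 1 ≤ triDistToActive c r0 := by
      have := dA_lip hact hr0
      omega
    obtain ⟨r1, hr1, hd1⟩ := dA_descent hact hw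
    rw [Function.iterate_succ_apply']
    simp only [ruleT, Bool.or_eq_true, decide_eq_true_eq]
    right
    have hpos : 0 < triActCount ((ruleT {1, 2})^[d] c) w :=
      triActCount_pos_iff.2 ⟨r1, hr1, hactive r1 hr1 hd1⟩
    have hne3 : triActCount ((ruleT {1, 2})^[d] c) w ≠ 3 := by
      intro h3
      have := triActCount_eq_three_iff.1 h3 r0 hr0
      rw [hinactive d r0 (by omega)] at this
      exact absurd this (by simp)
    have hle := triActCount_le ((ruleT {1, 2})^[d] c) w
    simp only [Finset.mem_insert, Finset.mem_singleton]
    omega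

lemma stable_iff (hact : ∃ v, c v = true) {u : ℤ × ℤ} {d : ℕ}
    (hw : triDistToActive c u = d + 1) :
    isStable (ruleT {1, 2}) c u ↔ ∀ r ∈ triNbrs u, triDistToActive c r = d := by
  constructor
  · intro hs
    by_contra hex
    have h1 := (main hact d u hw).2 hex
    rw [hs.2 (d + 1)] at h1
    exact absurd h1 (by simp)
  · intro hall
    refine ⟨?_, (main hact d u hw).1 hall⟩
    by_contra h
    rw [Bool.not_eq_false] at h
    have := dA_zero_of_active h
    omega

lemma nbr_dist_iff (hact : ∃ v, c v = true) {u v : ℤ × ℤ} {d : ℕ}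
    (hv : v ∈ triNbrs u) (hw : triDistToActive c u = d + 2) :
    triDistToActive c v = d + 1 ↔
      ∃ w ∈ semiPlane u v, triDist u w = d + 2 ∧ c w = true := by
  constructor
  · intro h
    obtain ⟨x, hx, hdx⟩ := dA_spec hact v
    rw [h] at hdx
    have h1 : triDistToActive c u ≤ triD u x := dA_le hx u
    have h2 := (triD_lip hv x).1
    have hux : triD u x = d + 2 := by omega
    refine ⟨x, (geo hv (by omega)).2 (by omega), ?_, hx⟩
    rw [triDist_eq_triD, hux]
  · rintro ⟨x, hxS, hxd, hxa⟩
    rw [triDist_eq_triD] at hxd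
    have hgeo := (geo hv (by omega)).1 hxS
    have h1 : triDistToActive c v ≤ triD v x := dA_le hxa v
    have h2 := dA_lip hact hv
    omega

end TriAux

/-- under rule 12 on the triangular grid, with `τ ≥ 2` the
distance from the inactive cell `u` to the nearest active cell, `u` is stable
iff for each of its three neighbors `v` the set `S_v ∩ D_τ(u)` contains an
active cell; moreover if `u` is not stable then it is active at time `τ`. -/
theorem stmt3 (c : ℤ × ℤ → Bool) (u : ℤ × ℤ) (τ : ℕ)
    (hact : ∃ v, c v = true) (hu : c u = false) (hτ2 : 2 ≤ τ)
    (hτ : triDistToActive c u = τ) :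
    (isStable (ruleT {1, 2}) c u ↔
      ∀ v ∈ triNbrs u, ∃ w ∈ semiPlane u v, triDist u w = τ ∧ c w = true) ∧
    (¬ isStable (ruleT {1, 2}) c u → (ruleT {1, 2})^[τ] c u = true) := by
  obtain ⟨d, rfl⟩ : ∃ d, τ = d + 2 := ⟨τ - 2, by omega⟩
  have hτ' : triDistToActive c u = (d + 1) + 1 := by omega
  constructor
  · rw [TriAux.stable_iff hact hτ']
    constructor
    · intro h v hv
      exact (TriAux.nbr_dist_iff hact hv hτ).1 (h v hv)
    · intro h v hv
      exact (TriAux.nbr_dist_iff hact hv hτ).2 (h v hv)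
  · intro hns
    have hex : ¬ ∀ r ∈ triNbrs u, triDistToActive c r = d + 1 := fun hall =>
      hns ((TriAux.stable_iff hact hτ').2 hall)
    exact (TriAux.main hact (d + 1) u hτ').2 hex
end

section
/- In the triangular grid with a periodic configuration c (periodic of even period n in both coordinate directions): let u be a cell whose three neighbors u1, u2, u3 are all inactive in c, suppose u is not stable for c under rule 23, and suppose the connected component G[0,u] of inactive cells containing u is a finite tree. Rooting this tree at u, let d1 ≥ d2 ≥ d3 be the depths of the three subtrees consisting of the descendants of u1, u2, u3 respectively. Then u is stable for c under rule 2 if and only if d1 = d2. -/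
/-- A configuration is periodic of period `n` in both coordinate directions. -/
def Periodic (n : ℕ) (c : ℤ × ℤ → Bool) : Prop :=
  ∀ p : ℤ × ℤ, c (p.1 + n, p.2) = c p ∧ c (p.1, p.2 + n) = c p

/-- The graph `G[0]` on the inactive cells of `c`, with adjacency inherited
from the triangular grid. -/
def triG0 (c : ℤ × ℤ → Bool) : SimpleGraph (ℤ × ℤ) where
  Adj p q := p ≠ q ∧ c p = false ∧ c q = false ∧ (q ∈ triNbrs p ∨ p ∈ triNbrs q)
  symm := ⟨fun p q h => ⟨h.1.symm, h.2.2.1, h.2.1, h.2.2.2.symm⟩⟩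
  loopless := ⟨fun p h => h.1 rfl⟩

/-- In the tree `G[0,u]` rooted at `u`, `w` is a descendant of the neighbor
`v` of `u` iff the path from `u` to `w` passes through `v`, i.e.
`dist u w = dist v w + 1`. The depth of the subtree of descendants of `v` is
the maximum of `dist v w` over such `w`. -/
def subtreeDepth (c : ℤ × ℤ → Bool) (u v : ℤ × ℤ) (d : ℕ) : Prop :=
  (∀ w, (triG0 c).Reachable u w →
      (triG0 c).dist u w = (triG0 c).dist v w + 1 → (triG0 c).dist v w ≤ d) ∧
  (∃ w, (triG0 c).Reachable u w ∧
      (triG0 c).dist u w = (triG0 c).dist v w + 1 ∧ (triG0 c).dist v w = d)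


namespace SimpleGraph

variable {V : Type*} {G : SimpleGraph V} {u v w x : V} {s : Finset V}

lemma exists_adj_dist_add_one_eq (h : 0 < G.dist v w) :
    ∃ v', G.Adj v v' ∧ G.dist v' w + 1 = G.dist v w := by
  obtain ⟨p, hp⟩ := (Reachable.of_dist_ne_zero h.ne').exists_walk_length_eq_dist
  cases p with
  | nil => simp at h
  | cons hadj p =>
    refine ⟨_, hadj, le_antisymm ?_ ?_⟩
    · have := dist_le p
      rw [Walk.length_cons] at hp
      omega
    · have := hadj.reachable.dist_triangle_left w
      rwa [dist_eq_one_iff_adj.mpr hadj, add_comm] at this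

lemma Reachable.exists_adj_dist_add_one_eq (h : G.Reachable u w) (hwu : w ≠ u) :
    ∃ v, G.Adj w v ∧ G.dist u v + 1 = G.dist u w := by
  simpa only [dist_comm (u := u)] using
    SimpleGraph.exists_adj_dist_add_one_eq (h.symm.pos_dist_of_ne hwu)

lemma Coloring.dist_eq_dist_add_one_of_adj (C : G.Coloring Bool) (hr : G.Reachable u v)
    (hadj : G.Adj v w) : G.dist u v = G.dist u w + 1 ∨ G.dist u w = G.dist u v + 1 := by
  have hne : G.dist u v ≠ G.dist u w := by
    intro h
    obtain ⟨p, hp⟩ := hr.exists_walk_length_eq_dist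
    obtain ⟨q, hq⟩ := (hr.trans hadj.reachable).exists_walk_length_eq_dist
    have hp' := C.even_length_iff_congr p
    have hq' := C.even_length_iff_congr q
    rw [hp, h, ← hq] at hp'
    apply C.valid hadj
    rw [Bool.eq_iff_iff]
    tauto
  have := hadj.diff_dist_adj (u := u)
  omega

lemma isAcyclic_induce_reachable (h : ∀ w, G.Reachable u w → ∀ p : G.Walk w w, ¬ p.IsCycle) :
    (G.induce {x | G.Reachable u x}).IsAcyclic := fun x _ hp =>
  h x x.2 _ (hp.map (f := (Embedding.induce _).toHom) Subtype.val_injective)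

lemma eq_of_adj_of_dist_add_one_eq (hT : (G.induce {x | G.Reachable u x}).IsAcyclic)
    {p q : V} (hp : G.Adj p w) (hq : G.Adj q w) (hrp : G.Reachable u p) (hrq : G.Reachable u q)
    (hdp : G.dist u p + 1 = G.dist u w) (hdq : G.dist u q + 1 = G.dist u w) : p = q := by
  classical
  set S := {x | G.Reachable u x}
  have hS {y : V} (W : G.Walk u y) : ∀ x ∈ W.support, x ∈ S :=
    fun x hx => (W.takeUntil x hx).reachable
  have induce_isPath {y : V} (W : G.Walk u y) (hW : W.length = G.dist u y) :
      (W.induce S (hS W)).IsPath :=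
    Walk.IsPath.of_map (f := (Embedding.induce S).toHom)
      (by rw [Walk.map_induce]; exact W.isPath_of_length_eq_dist hW)
  obtain ⟨wp, hwp⟩ := hrp.exists_walk_length_eq_dist
  obtain ⟨wq, hwq⟩ := hrq.exists_walk_length_eq_dist
  have h := (hT.subsingleton_path _ _).elim
    ⟨_, induce_isPath (wp.concat hp) (by simp [hwp, hdp])⟩
    ⟨_, induce_isPath (wq.concat hq) (by simp [hwq, hdq])⟩
  have h' := congrArg (fun P => P.1.map (Embedding.induce S).toHom) h
  simp only [Walk.map_induce] at h'
  exact (Walk.concat_inj h').1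

/-- The height of the subtree rooted at `w` when the tree with vertex set `s` is rooted at `u`;
`x` belongs to that subtree when `w` lies on a geodesic from `u` to `x`. -/
noncomputable def subtreeHeight (G : SimpleGraph V) (u : V) (s : Finset V) (w : V) : ℕ :=
  {x ∈ s | G.dist u x = G.dist u w + G.dist w x}.sup (G.dist w)

lemma dist_le_subtreeHeight (hx : x ∈ s) (hux : G.dist u x = G.dist u w + G.dist w x) :
    G.dist w x ≤ G.subtreeHeight u s w :=
  Finset.le_sup (f := G.dist w) (Finset.mem_filter.mpr ⟨hx, hux⟩)

lemma subtreeHeight_le_iff {n : ℕ} : G.subtreeHeight u s w ≤ n ↔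
    ∀ x ∈ s, G.dist u x = G.dist u w + G.dist w x → G.dist w x ≤ n := by
  simp [subtreeHeight, Finset.sup_le_iff]

lemma exists_dist_eq_subtreeHeight (hw : w ∈ s) :
    ∃ x ∈ s, G.dist u x = G.dist u w + G.dist w x ∧ G.dist w x = G.subtreeHeight u s w := by
  obtain ⟨x, hx, hsup⟩ := Finset.exists_mem_eq_sup {x ∈ s | G.dist u x = G.dist u w + G.dist w x}
    ⟨w, by simp [hw]⟩ (G.dist w)
  rw [Finset.mem_filter] at hx
  exact ⟨x, hx.1, hx.2, hsup.symm⟩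

lemma subtreeHeight_lt_of_adj (hrw : G.Reachable u w) (hadj : G.Adj w v) (hv : v ∈ s)
    (hdv : G.dist u v = G.dist u w + 1) : G.subtreeHeight u s v < G.subtreeHeight u s w := by
  obtain ⟨x, hx, hvx, hheight⟩ := exists_dist_eq_subtreeHeight (G := G) (u := u) hv
  have hwx := hadj.reachable.dist_triangle_left x
  have hux := hrw.dist_triangle_left x
  rw [dist_eq_one_iff_adj.mpr hadj] at hwx
  have := dist_le_subtreeHeight hx (show G.dist u x = G.dist u w + G.dist w x by omega)
  omega

lemma exists_adj_le_subtreeHeight_add_one (hrw : G.Reachable u w) (hw : w ∈ s)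
    (hpos : 0 < G.subtreeHeight u s w) :
    ∃ v, G.Adj w v ∧ G.dist u v = G.dist u w + 1 ∧
      G.subtreeHeight u s w ≤ G.subtreeHeight u s v + 1 := by
  obtain ⟨x, hx, hwx, hheight⟩ := exists_dist_eq_subtreeHeight (u := u) hw
  obtain ⟨v, hadj, hvx⟩ := exists_adj_dist_add_one_eq (hheight ▸ hpos)
  have huv := hrw.trans hadj.reachable |>.dist_triangle_left x
  have hvu := hadj.diff_dist_adj (u := u)
  have hdv : G.dist u v = G.dist u w + 1 := by omega
  have := dist_le_subtreeHeight hx (show G.dist u x = G.dist u v + G.dist v x by omega)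
  exact ⟨v, hadj, hdv, by omega⟩

end SimpleGraph

open SimpleGraph

lemma mem_triNbrs_iff {p q : ℤ × ℤ} : q ∈ triNbrs p ↔
    q.2 = p.2 ∧ (q.1 = p.1 - 1 ∨ q.1 = p.1 + 1) ∨
      q.1 = p.1 ∧ q.2 = if (p.1 + p.2) % 2 = 0 then p.2 - 1 else p.2 + 1 := by
  simp only [triNbrs, Finset.mem_insert, Finset.mem_singleton, Prod.ext_iff, Int.even_iff]
  omega

lemma mem_triNbrs_comm {p q : ℤ × ℤ} : q ∈ triNbrs p ↔ p ∈ triNbrs q := by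
  simp only [mem_triNbrs_iff]
  split_ifs <;> omega

lemma ne_of_mem_triNbrs {p q : ℤ × ℤ} (h : q ∈ triNbrs p) : q ≠ p := by
  rw [mem_triNbrs_iff] at h
  rw [Ne, Prod.ext_iff]
  split_ifs at h <;> omega

lemma card_triNbrs (p : ℤ × ℤ) : (triNbrs p).card = 3 := by
  rw [triNbrs, Finset.card_insert_of_notMem, Finset.card_pair]
  · simp [Prod.ext_iff]
  · simp [Prod.ext_iff]
    omega

lemma triG0_adj_iff {c : ℤ × ℤ → Bool} {p q : ℤ × ℤ} :
    (triG0 c).Adj p q ↔ c p = false ∧ c q = false ∧ q ∈ triNbrs p := by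
  simp only [triG0, ← mem_triNbrs_comm (p := p), or_self]
  exact ⟨fun h => h.2, fun h => ⟨(ne_of_mem_triNbrs h.2.2).symm, h⟩⟩

def triG0Coloring (c : ℤ × ℤ → Bool) : (triG0 c).Coloring Bool :=
  Coloring.mk (fun p => decide (Even (p.1 + p.2))) fun {p q} h => by
    have := (triG0_adj_iff.mp h).2.2
    rw [mem_triNbrs_iff] at this
    simp only [ne_eq, decide_eq_decide, Int.even_iff]
    split_ifs at this <;> omega

lemma iterate_ruleT_succ_apply (I : Finset ℕ) (c : ℤ × ℤ → Bool) (p : ℤ × ℤ) (t : ℕ) :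
    (ruleT I)^[t + 1] c p =
      ((ruleT I)^[t] c p || decide (triActCount ((ruleT I)^[t] c) p ∈ I)) := by
  rw [Function.iterate_succ_apply']
  rfl

lemma iterate_ruleT_eq_false_of_le {I : Finset ℕ} {c : ℤ × ℤ → Bool} {p : ℤ × ℤ} {t t' : ℕ}
    (htt' : t ≤ t') (h : (ruleT I)^[t'] c p = false) : (ruleT I)^[t] c p = false := by
  have hmono : Monotone fun t => (ruleT I)^[t] c p := monotone_nat_of_le_succ fun t => by
    simp only [iterate_ruleT_succ_apply]
    exact Bool.left_le_or _ _
  exact Bool.eq_false_of_le_false (h ▸ hmono htt')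

lemma isStable_ruleT_iff {I : Finset ℕ} {c : ℤ × ℤ → Bool} {u : ℤ × ℤ} :
    isStable (ruleT I) c u ↔ c u = false ∧
      ∀ t, (ruleT I)^[t] c u = false → triActCount ((ruleT I)^[t] c) u ∉ I := by
  constructor
  · rintro ⟨hu, hstable⟩
    refine ⟨hu, fun t _ hI => ?_⟩
    simpa [iterate_ruleT_succ_apply, hI] using hstable (t + 1)
  · rintro ⟨hu, hstep⟩
    refine ⟨hu, fun t => ?_⟩
    induction t with
    | zero => exact hu
    | succ t ih => simp [iterate_ruleT_succ_apply, ih, hstep t ih]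

lemma triActCount_eq_two_iff (c : ℤ × ℤ → Bool) (p : ℤ × ℤ) :
    triActCount c p = 2 ↔ ((triNbrs p).filter fun q => c q = false).card = 1 := by
  have := Finset.card_filter_add_card_filter_not (s := triNbrs p) (fun q => c q = true)
  simp only [Bool.not_eq_true, card_triNbrs] at this
  rw [triActCount]
  omega

lemma triActCount_eq_of_triNbrs_eq {u u1 u2 u3 : ℤ × ℤ} (hnbrs : triNbrs u = {u1, u2, u3})
    (h12 : u1 ≠ u2) (h13 : u1 ≠ u3) (h23 : u2 ≠ u3) (c : ℤ × ℤ → Bool) :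
    triActCount c u = (c u1).toNat + (c u2).toNat + (c u3).toNat := by
  rw [triActCount, hnbrs, Finset.card_filter, Finset.sum_insert (by simp [h12, h13]),
    Finset.sum_pair h23]
  cases c u1 <;> cases c u2 <;> cases c u3 <;> rfl

lemma eq_false_of_triG0_reachable {c : ℤ × ℤ → Bool} {u w : ℤ × ℤ}
    (h : (triG0 c).Reachable u w) (hwu : w ≠ u) : c w = false := by
  obtain ⟨v, hwv, -⟩ := h.exists_adj_dist_add_one_eq hwu
  exact (triG0_adj_iff.mp hwv).1

section RuleTwo

variable {c : ℤ × ℤ → Bool} {u w : ℤ × ℤ} {s : Finset (ℤ × ℤ)} {t : ℕ}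

lemma iterate_ruleT_two_eq_false_of_parent (hs : ∀ x, (triG0 c).Reachable u x → x ∈ s)
    (hut : (ruleT {2})^[t] c u = false)
    (ih : ∀ w, (triG0 c).Reachable u w → w ≠ u →
      ((ruleT {2})^[t] c w = true ↔ (triG0 c).subtreeHeight u s w < t))
    {P : ℤ × ℤ} (hrw : (triG0 c).Reachable u w) (hwP : (triG0 c).Adj w P)
    (hPw : (triG0 c).dist u P + 1 = (triG0 c).dist u w)
    (hle : t ≤ (triG0 c).subtreeHeight u s w) : (ruleT {2})^[t] c P = false := by
  by_cases hPu : P = u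
  · exact hPu ▸ hut
  · have hrP := hrw.trans hwP.reachable
    have := subtreeHeight_lt_of_adj hrP hwP.symm (hs w hrw) hPw.symm
    rw [← Bool.not_eq_true, ih P hrP hPu]
    omega

lemma triActCount_iterate_ruleT_two_eq_two_iff
    (hT : ((triG0 c).induce {x | (triG0 c).Reachable u x}).IsAcyclic)
    (hs : ∀ x, (triG0 c).Reachable u x → x ∈ s) (hut : (ruleT {2})^[t] c u = false)
    (ih : ∀ w, (triG0 c).Reachable u w → w ≠ u →
      ((ruleT {2})^[t] c w = true ↔ (triG0 c).subtreeHeight u s w < t))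
    (hrw : (triG0 c).Reachable u w) (hwu : w ≠ u) (hle : t ≤ (triG0 c).subtreeHeight u s w) :
    triActCount ((ruleT {2})^[t] c) w = 2 ↔ (triG0 c).subtreeHeight u s w = t := by
  set G := triG0 c
  set c' := (ruleT {2})^[t] c
  have child_eq_false_iff (v : ℤ × ℤ) (hwv : G.Adj w v) (hdv : G.dist u v = G.dist u w + 1) :
      c' v = false ↔ t ≤ G.subtreeHeight u s v := by
    have hvu : v ≠ u := by rintro rfl; simp at hdv
    rw [← Bool.not_eq_true, ih v (hrw.trans hwv.reachable) hvu, not_lt]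
  obtain ⟨P, hwP, hPw⟩ := hrw.exists_adj_dist_add_one_eq hwu
  have hPmem : P ∈ (triNbrs w).filter fun q => c' q = false :=
    Finset.mem_filter.mpr ⟨(triG0_adj_iff.mp hwP).2.2,
      iterate_ruleT_two_eq_false_of_parent hs hut ih hrw hwP hPw hle⟩
  -- The inactive neighbours of `w` are its parent `P` and the children of height at least `t`.
  rw [triActCount_eq_two_iff, Finset.card_eq_one]
  constructor
  · rintro ⟨a, ha⟩
    by_contra hne
    obtain ⟨v, hwv, hdv, hv⟩ := exists_adj_le_subtreeHeight_add_one hrw (hs w hrw) (by omega)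
    have hvmem : v ∈ (triNbrs w).filter fun q => c' q = false :=
      Finset.mem_filter.mpr
        ⟨(triG0_adj_iff.mp hwv).2.2, (child_eq_false_iff v hwv hdv).mpr (by omega)⟩
    rw [ha, Finset.mem_singleton] at hPmem hvmem
    subst hPmem hvmem
    omega
  · intro heq
    refine ⟨P, Finset.eq_singleton_iff_unique_mem.mpr ⟨hPmem, fun q hq => ?_⟩⟩
    rw [Finset.mem_filter] at hq
    have hcq : c q = false := iterate_ruleT_eq_false_of_le t.zero_le hq.2
    have hwq : G.Adj w q :=
      triG0_adj_iff.mpr ⟨eq_false_of_triG0_reachable hrw hwu, hcq, hq.1⟩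
    have hrq := hrw.trans hwq.reachable
    rcases (triG0Coloring c).dist_eq_dist_add_one_of_adj hrw hwq with hqw | hdq
    · exact eq_of_adj_of_dist_add_one_eq hT hwq.symm hwP.symm hrq
        (hrw.trans hwP.reachable) hqw.symm hPw
    · have := subtreeHeight_lt_of_adj hrw hwq (hs q hrq) hdq
      have := (child_eq_false_iff q hwq hdq).mp hq.2
      omega

theorem iterate_ruleT_two_eq_true_iff
    (hT : ((triG0 c).induce {x | (triG0 c).Reachable u x}).IsAcyclic)
    (hs : ∀ x, (triG0 c).Reachable u x → x ∈ s) (hut : (ruleT {2})^[t] c u = false)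
    (hrw : (triG0 c).Reachable u w) (hwu : w ≠ u) :
    (ruleT {2})^[t] c w = true ↔ (triG0 c).subtreeHeight u s w < t := by
  induction t generalizing w with
  | zero => simp [eq_false_of_triG0_reachable hrw hwu]
  | succ t ih =>
    have hut' := iterate_ruleT_eq_false_of_le t.le_succ hut
    rw [iterate_ruleT_succ_apply]
    by_cases hlt : (triG0 c).subtreeHeight u s w < t
    · simp only [(ih hut' hrw hwu).mpr hlt, Bool.true_or, true_iff]
      omega
    · have hw : (ruleT {2})^[t] c w = false := by
        rw [← Bool.not_eq_true, ih hut' hrw hwu]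
        exact hlt
      rw [hw, Bool.false_or, decide_eq_true_iff, Finset.mem_singleton,
        triActCount_iterate_ruleT_two_eq_two_iff hT hs hut' (fun _ => ih hut') hrw hwu (by omega)]
      omega

end RuleTwo

lemma subtreeHeight_eq_of_subtreeDepth {c : ℤ × ℤ → Bool} {u v : ℤ × ℤ} {s : Finset (ℤ × ℤ)}
    {d : ℕ} (hs : ∀ w, (triG0 c).Reachable u w ↔ w ∈ s) (huv : (triG0 c).Adj u v)
    (hd : subtreeDepth c u v d) : (triG0 c).subtreeHeight u s v = d := by
  have h1 : (triG0 c).dist u v = 1 := dist_eq_one_iff_adj.mpr huv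
  obtain ⟨hle, x, hrx, hux, hvx⟩ := hd
  refine le_antisymm (subtreeHeight_le_iff.mpr fun y hy hy' => hle y ((hs y).mpr hy) ?_) ?_
  · omega
  · exact hvx ▸ dist_le_subtreeHeight ((hs x).mp hrx) (by omega)

theorem stmt8_general (c : ℤ × ℤ → Bool) (u u1 u2 u3 : ℤ × ℤ)
    (hnbrs : triNbrs u = {u1, u2, u3})
    (h12 : u1 ≠ u2) (h13 : u1 ≠ u3) (h23 : u2 ≠ u3)
    (hu : c u = false)
    (hc1 : c u1 = false) (hc2 : c u2 = false) (hc3 : c u3 = false)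
    -- the component is finite
    (s : Finset (ℤ × ℤ)) (hs : ∀ w, (triG0 c).Reachable u w ↔ w ∈ s)
    -- the component is acyclic (hence a tree, being connected by definition)
    (hacyc : ∀ w, (triG0 c).Reachable u w → ∀ p : (triG0 c).Walk w w, ¬ p.IsCycle)
    (d1 d2 d3 : ℕ)
    (hd1 : subtreeDepth c u u1 d1)
    (hd2 : subtreeDepth c u u2 d2)
    (hd3 : subtreeDepth c u u3 d3)
    (hord21 : d2 ≤ d1) (hord32 : d3 ≤ d2) :
    isStable (ruleT {2}) c u ↔ d1 = d2 := by
  have child_toNat {v : ℤ × ℤ} {d : ℕ} (hv : v ∈ triNbrs u) (hcv : c v = false)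
      (hd : subtreeDepth c u v d) (t : ℕ) (hut : (ruleT {2})^[t] c u = false) :
      ((ruleT {2})^[t] c v).toNat = if d < t then 1 else 0 := by
    have huv : (triG0 c).Adj u v := triG0_adj_iff.mpr ⟨hu, hcv, hv⟩
    have := iterate_ruleT_two_eq_true_iff (isAcyclic_induce_reachable hacyc)
      (fun x => (hs x).mp) hut huv.reachable (ne_of_mem_triNbrs hv)
    rw [subtreeHeight_eq_of_subtreeDepth hs huv hd] at this
    cases h : (ruleT {2})^[t] c v <;> simp_all
  have root_count (t : ℕ) (hut : (ruleT {2})^[t] c u = false) :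
      triActCount ((ruleT {2})^[t] c) u =
        (if d1 < t then 1 else 0) + (if d2 < t then 1 else 0) + (if d3 < t then 1 else 0) := by
    rw [triActCount_eq_of_triNbrs_eq hnbrs h12 h13 h23, child_toNat (by simp [hnbrs]) hc1 hd1 t hut,
      child_toNat (by simp [hnbrs]) hc2 hd2 t hut, child_toNat (by simp [hnbrs]) hc3 hd3 t hut]
  constructor
  · intro hstab
    have := (isStable_ruleT_iff.mp hstab).2 d1 (hstab.2 d1)
    rw [root_count d1 (hstab.2 d1), Finset.mem_singleton] at this
    split_ifs at this <;> omega
  · intro heq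
    refine isStable_ruleT_iff.mpr ⟨hu, fun t hut => ?_⟩
    rw [root_count t hut, Finset.mem_singleton]
    split_ifs <;> omega

/-- triangular grid, `c` periodic of even period `n`. Let `u` be
an inactive cell whose three neighbors `u1, u2, u3` are all inactive, suppose
`u` is not stable under rule 23, and suppose the component `G[0,u]` of
inactive cells containing `u` is a finite tree. Rooting the tree at `u`, let
`d1 ≥ d2 ≥ d3` be the depths of the subtrees of descendants of `u1, u2, u3`.
Then `u` is stable under rule 2 iff `d1 = d2`. -/
theorem stmt8 (n : ℕ) (hn : 0 < n) (hne : Even n) (c : ℤ × ℤ → Bool)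
    (hper : Periodic n c) (u u1 u2 u3 : ℤ × ℤ)
    (hnbrs : triNbrs u = {u1, u2, u3})
    (h12 : u1 ≠ u2) (h13 : u1 ≠ u3) (h23 : u2 ≠ u3)
    (hu : c u = false)
    (hc1 : c u1 = false) (hc2 : c u2 = false) (hc3 : c u3 = false)
    (hnstab23 : ¬ isStable (ruleT {2, 3}) c u)
    -- the component is finite
    (s : Finset (ℤ × ℤ)) (hs : ∀ w, (triG0 c).Reachable u w ↔ w ∈ s)
    -- the component is acyclic (hence a tree, being connected by definition)
    (hacyc : ∀ w, (triG0 c).Reachable u w → ∀ p : (triG0 c).Walk w w, ¬ p.IsCycle)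
    (d1 d2 d3 : ℕ)
    (hd1 : subtreeDepth c u u1 d1)
    (hd2 : subtreeDepth c u u2 d2)
    (hd3 : subtreeDepth c u u3 d3)
    (hord21 : d2 ≤ d1) (hord32 : d3 ≤ d2) :
    isStable (ruleT {2}) c u ↔ d1 = d2 :=
  stmt8_general c u u1 u2 u3 hnbrs h12 h13 h23 hu hc1 hc2 hc3 s hs hacyc d1 d2 d3 hd1 hd2 hd3 hord21
    hord32
end

section
/- In the square grid under rule 234: let x be a finite configuration of dimensions n×n, c = c(x) the periodic configuration it generates, and u a cell of the n×n torus with c_u = 0. Then u is stable for c if and only if there exists a set S of cells of the n×n torus such that u ∈ S, every cell of S is inactive in c, and every cell of S has at least 3 of its 4 neighbors in S (i.e. the induced subgraph G[S] has minimum degree 3). -/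
/-- The von Neumann neighborhood of a cell of the square grid. -/
def sqNbrs (p : ℤ × ℤ) : Finset (ℤ × ℤ) :=
  {(p.1 + 1, p.2), (p.1 - 1, p.2), (p.1, p.2 + 1), (p.1, p.2 - 1)}

/-- Number of active neighbors of `p` in configuration `c`. -/
def sqActCount (c : ℤ × ℤ → Bool) (p : ℤ × ℤ) : ℕ :=
  ((sqNbrs p).filter (fun q => c q = true)).card

/-- The freezing totalistic rule on the square grid with activating set `I`:
active cells stay active, an inactive cell becomes active iff its number of
active neighbors lies in `I`. -/
def ruleS (I : Finset ℕ) (c : ℤ × ℤ → Bool) : ℤ × ℤ → Bool :=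
  fun p => c p || decide (sqActCount c p ∈ I)

/-- The periodic configuration `c(x)` generated by the finite `n × n`
configuration `x` (repeating `x` in all directions). -/
def cPer (n : ℕ) (x : ℤ × ℤ → Bool) : ℤ × ℤ → Bool :=
  fun p => x (p.1 % (n : ℤ), p.2 % (n : ℤ))

/-- A set of cells is periodic of period `n` in both coordinate directions
(i.e. it is a set of cells of the `n × n` torus). -/
def PeriodicSet (n : ℕ) (S : Set (ℤ × ℤ)) : Prop :=
  ∀ p : ℤ × ℤ, (((p.1 + n, p.2) : ℤ × ℤ) ∈ S ↔ p ∈ S) ∧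
    (((p.1, p.2 + n) : ℤ × ℤ) ∈ S ↔ p ∈ S)

lemma sqNbrs_card (p : ℤ × ℤ) : (sqNbrs p).card = 4 := by
  rw [sqNbrs]
  rw [Finset.card_insert_of_notMem (by simp [Prod.ext_iff] <;> omega),
      Finset.card_insert_of_notMem (by simp [Prod.ext_iff] <;> omega),
      Finset.card_insert_of_notMem (by simp [Prod.ext_iff] <;> omega),
      Finset.card_singleton]

lemma sqNbrs_shift (a b : ℤ) (p : ℤ × ℤ) :
    sqNbrs (p.1 + a, p.2 + b) = (sqNbrs p).image (fun q => (q.1 + a, q.2 + b)) := by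
  ext q
  simp only [sqNbrs, Finset.mem_image, Finset.mem_insert, Finset.mem_singleton, Prod.ext_iff]
  constructor
  · rintro (⟨h1, h2⟩ | ⟨h1, h2⟩ | ⟨h1, h2⟩ | ⟨h1, h2⟩)
    · exact ⟨(p.1 + 1, p.2), by simp, by simp <;> omega⟩
    · exact ⟨(p.1 - 1, p.2), by simp <;> omega, by simp <;> omega⟩
    · exact ⟨(p.1, p.2 + 1), by simp <;> omega, by simp <;> omega⟩
    · exact ⟨(p.1, p.2 - 1), by simp <;> omega, by simp <;> omega⟩
  · rintro ⟨r, (⟨h1,h2⟩|⟨h1,h2⟩|⟨h1,h2⟩|⟨h1,h2⟩), h3, h4⟩ <;> simp_all <;> omega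

lemma shift_inj (a b : ℤ) : Function.Injective (fun q : ℤ × ℤ => (q.1 + a, q.2 + b)) := by
  intro q r h
  simp only [Prod.ext_iff] at h ⊢
  omega

lemma sqActCount_shift (c : ℤ × ℤ → Bool) (a b : ℤ) (p : ℤ × ℤ) :
    sqActCount c (p.1 + a, p.2 + b) = sqActCount (fun q => c (q.1 + a, q.2 + b)) p := by
  unfold sqActCount
  rw [sqNbrs_shift, Finset.filter_image, Finset.card_image_of_injective _ (shift_inj a b)]

lemma ruleS_shift (I : Finset ℕ) (c : ℤ × ℤ → Bool) (a b : ℤ)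
    (h : ∀ p : ℤ × ℤ, c (p.1 + a, p.2 + b) = c p) (p : ℤ × ℤ) :
    ruleS I c (p.1 + a, p.2 + b) = ruleS I c p := by
  unfold ruleS
  rw [h p, sqActCount_shift]
  have : (fun q : ℤ × ℤ => c (q.1 + a, q.2 + b)) = c := funext h
  rw [this]

lemma iter_shift (I : Finset ℕ) (c : ℤ × ℤ → Bool) (a b : ℤ)
    (h : ∀ p : ℤ × ℤ, c (p.1 + a, p.2 + b) = c p) (t : ℕ) (p : ℤ × ℤ) :
    (ruleS I)^[t] c (p.1 + a, p.2 + b) = (ruleS I)^[t] c p := by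
  induction t generalizing p with
  | zero => exact h p
  | succ t ih =>
    simp only [Function.iterate_succ_apply']
    exact ruleS_shift I _ a b ih p

lemma iter_mono (I : Finset ℕ) (c : ℤ × ℤ → Bool) (p : ℤ × ℤ) {t t' : ℕ} (h : t ≤ t')
    (ht : (ruleS I)^[t] c p = true) : (ruleS I)^[t'] c p = true := by
  induction t', h using Nat.le_induction with
  | base => exact ht
  | succ t' h ih =>
    rw [Function.iterate_succ_apply']
    simp [ruleS, ih]

/-- square grid under rule 234, `x` a finite `n × n`
configuration, `c = c(x)` and `u` an inactive cell. Then `u` is stable for `c`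
iff there is a set `S` of cells of the torus with `u ∈ S`, every cell of `S`
inactive in `c`, and every cell of `S` having at least 3 of its 4 neighbors
in `S` (the induced subgraph `G[S]` has minimum degree 3). -/
theorem stmt10 (n : ℕ) (hn : 0 < n) (x : ℤ × ℤ → Bool) (u : ℤ × ℤ)
    (hu : cPer n x u = false) :
    isStable (ruleS {2, 3, 4}) (cPer n x) u ↔
      ∃ S : Set (ℤ × ℤ), u ∈ S ∧ (∀ w ∈ S, cPer n x w = false) ∧
        (∀ w ∈ S, 3 ≤ (S ∩ ↑(sqNbrs w)).ncard) ∧ PeriodicSet n S := by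
  classical
  constructor
  · rintro ⟨h0, hst⟩
    refine ⟨{w | ∀ t : ℕ, (ruleS {2,3,4})^[t] (cPer n x) w = false}, hst, ?_, ?_, ?_⟩
    · intro w hw
      simpa using hw 0
    · intro w hw
      have hw' : ∀ t : ℕ, (ruleS {2,3,4})^[t] (cPer n x) w = false := hw
      have hfeq : {w | ∀ t : ℕ, (ruleS {2,3,4})^[t] (cPer n x) w = false} ∩ ↑(sqNbrs w)
          = ↑((sqNbrs w).filter
              (fun q => ∀ t : ℕ, (ruleS {2,3,4})^[t] (cPer n x) q = false)) := by
        ext q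
        simp only [Set.mem_inter_iff, Set.mem_setOf_eq, Finset.coe_filter, Finset.mem_coe]
        tauto
      rw [hfeq, Set.ncard_coe_finset]
      have hsplit := Finset.card_filter_add_card_filter_not
        (s := sqNbrs w) (p := fun q => ∀ t : ℕ, (ruleS {2,3,4})^[t] (cPer n x) q = false)
      rw [sqNbrs_card] at hsplit
      have hle : ((sqNbrs w).filter
          (fun q => ¬ ∀ t : ℕ, (ruleS {2,3,4})^[t] (cPer n x) q = false)).card ≤ 1 := by
        by_contra hcon
        push_neg at hcon
        obtain ⟨q1, hq1, q2, hq2, hne⟩ := Finset.one_lt_card.mp hcon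
        simp only [Finset.mem_filter, not_forall] at hq1 hq2
        obtain ⟨hq1n, t1, ht1⟩ := hq1
        obtain ⟨hq2n, t2, ht2⟩ := hq2
        simp only [ne_eq, Bool.not_eq_false] at ht1 ht2
        have h1 : (ruleS {2,3,4})^[max t1 t2] (cPer n x) q1 = true :=
          iter_mono _ _ _ (le_max_left _ _) ht1
        have h2 : (ruleS {2,3,4})^[max t1 t2] (cPer n x) q2 = true :=
          iter_mono _ _ _ (le_max_right _ _) ht2
        have hcard2 : 2 ≤ sqActCount ((ruleS {2,3,4})^[max t1 t2] (cPer n x)) w := by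
          have hsub : ({q1, q2} : Finset (ℤ × ℤ)) ⊆ (sqNbrs w).filter
              (fun q => (ruleS {2,3,4})^[max t1 t2] (cPer n x) q = true) := by
            intro q hq
            simp only [Finset.mem_insert, Finset.mem_singleton] at hq
            rcases hq with rfl | rfl <;>
              simp [Finset.mem_filter, hq1n, hq2n, h1, h2]
          have := Finset.card_le_card hsub
          rwa [Finset.card_pair hne] at this
        have hcard4 : sqActCount ((ruleS {2,3,4})^[max t1 t2] (cPer n x)) w ≤ 4 := by
          have := Finset.card_filter_le (sqNbrs w)
            (fun q => (ruleS {2,3,4})^[max t1 t2] (cPer n x) q = true)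
          rw [sqNbrs_card] at this
          exact this
        have hmem : sqActCount ((ruleS {2,3,4})^[max t1 t2] (cPer n x)) w
            ∈ ({2, 3, 4} : Finset ℕ) := by
          simp only [Finset.mem_insert, Finset.mem_singleton]
          omega
        have htrue : (ruleS {2,3,4})^[max t1 t2 + 1] (cPer n x) w = true := by
          rw [Function.iterate_succ_apply']
          simp [ruleS, hmem]
        rw [hw' (max t1 t2 + 1)] at htrue
        exact absurd htrue (by simp)
      omega
    · intro p
      have hmod : ∀ a : ℤ, (a + (n:ℤ)) % n = a % n := by
        intro a
        rw [show a + (n:ℤ) = a + (n:ℤ) * 1 by ring, Int.add_mul_emod_self_left]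
      have hper1 : ∀ q : ℤ × ℤ, cPer n x (q.1 + n, q.2 + 0) = cPer n x q := by
        intro q
        unfold cPer
        simp [hmod]
      have hper2 : ∀ q : ℤ × ℤ, cPer n x (q.1 + 0, q.2 + n) = cPer n x q := by
        intro q
        unfold cPer
        simp [hmod]
      have hs1 : ∀ t (q : ℤ × ℤ),
          (ruleS {2,3,4})^[t] (cPer n x) (q.1 + n, q.2) = (ruleS {2,3,4})^[t] (cPer n x) q := by
        intro t q
        have := iter_shift {2,3,4} (cPer n x) n 0 hper1 t q
        simpa using this
      have hs2 : ∀ t (q : ℤ × ℤ),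
          (ruleS {2,3,4})^[t] (cPer n x) (q.1, q.2 + n) = (ruleS {2,3,4})^[t] (cPer n x) q := by
        intro t q
        have := iter_shift {2,3,4} (cPer n x) 0 n hper2 t q
        simpa using this
      constructor
      · simp only [Set.mem_setOf_eq]
        constructor
        · intro h t
          rw [← hs1 t p]
          exact h t
        · intro h t
          rw [hs1 t p]
          exact h t
      · simp only [Set.mem_setOf_eq]
        constructor
        · intro h t
          rw [← hs2 t p]
          exact h t
        · intro h t
          rw [hs2 t p]
          exact h t
  · rintro ⟨S, huS, hS0, hdeg, -⟩
    refine ⟨hu, ?_⟩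
    have key : ∀ t : ℕ, ∀ w ∈ S, (ruleS {2,3,4})^[t] (cPer n x) w = false := by
      intro t
      induction t with
      | zero => simpa using hS0
      | succ t ih =>
        intro w hw
        rw [Function.iterate_succ_apply']
        have h3 : 3 ≤ ((sqNbrs w).filter (fun q => q ∈ S)).card := by
          have h := hdeg w hw
          have hfeq : S ∩ ↑(sqNbrs w) = ↑((sqNbrs w).filter (fun q => q ∈ S)) := by
            ext q
            simp only [Set.mem_inter_iff, Finset.coe_filter, Set.mem_setOf_eq, Finset.mem_coe]
            tauto
          rwa [hfeq, Set.ncard_coe_finset] at h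
        have hsplit := Finset.card_filter_add_card_filter_not
          (s := sqNbrs w) (p := fun q => q ∈ S)
        rw [sqNbrs_card] at hsplit
        have hsub : (sqNbrs w).filter (fun q => (ruleS {2,3,4})^[t] (cPer n x) q = true)
            ⊆ (sqNbrs w).filter (fun q => ¬ q ∈ S) := by
          intro q hq
          simp only [Finset.mem_filter] at hq ⊢
          refine ⟨hq.1, fun hqS => ?_⟩
          rw [ih q hqS] at hq
          exact absurd hq.2 (by simp)
        have hcount : sqActCount ((ruleS {2,3,4})^[t] (cPer n x)) w ≤ 1 := by
          have h1 := Finset.card_le_card hsub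
          unfold sqActCount
          omega
        have hnmem : sqActCount ((ruleS {2,3,4})^[t] (cPer n x)) w
            ∉ ({2, 3, 4} : Finset ℕ) := by
          simp only [Finset.mem_insert, Finset.mem_singleton]
          omega
        simp [ruleS, ih w hw, hnmem]
    exact fun t => key t u huS
end

section
/- In the square grid under rule 234: let x be a finite configuration of dimensions n×n and u ∈ [n]×[n] a cell with x_u = 0. Then u is stable for the periodic configuration c(x) if and only if u (identified with its copy inside the central tiling of D(x)) is stable for the periodic configuration D(c) = c(D(x)). -/
/-- The periodic configuration `D(c) = c(D(x))` generated by the finite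
`m × m` configuration `D(x)`, `m = 2n² + 3n`, whose fundamental domain is the
coordinate range `[-n²-n, n²+2n)²`: a central block `[-n², n²+n)²` tiled by
periodic repetitions of `x` (one copy of `x` occupying `[0,n) × [0,n)`),
surrounded by a border of width `n` of inactive cells. -/
def Dconf (n : ℕ) (x : ℤ × ℤ → Bool) : ℤ × ℤ → Bool := fun p =>
  let N : ℤ := (n : ℤ)
  let m : ℤ := 2 * N ^ 2 + 3 * N
  let r1 : ℤ := (p.1 + (N ^ 2 + N)) % m - (N ^ 2 + N)
  let r2 : ℤ := (p.2 + (N ^ 2 + N)) % m - (N ^ 2 + N)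
  if -N ^ 2 ≤ r1 ∧ r1 < N ^ 2 + N ∧ -N ^ 2 ≤ r2 ∧ r2 < N ^ 2 + N then
    x (r1 % N, r2 % N)
  else false

namespace S11

abbrev F : (ℤ × ℤ → Bool) → (ℤ × ℤ → Bool) := ruleS {2, 3, 4}

lemma count_formula (c : ℤ × ℤ → Bool) (p : ℤ × ℤ) :
    sqActCount c p =
      (if c (p.1 + 1, p.2) = true then 1 else 0) +
      ((if c (p.1 - 1, p.2) = true then 1 else 0) +
      ((if c (p.1, p.2 + 1) = true then 1 else 0) +
      (if c (p.1, p.2 - 1) = true then 1 else 0))) := by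
  unfold sqActCount sqNbrs
  rw [Finset.card_filter]
  rw [Finset.sum_insert (by simp [Prod.ext_iff] <;> omega),
      Finset.sum_insert (by simp [Prod.ext_iff] <;> omega),
      Finset.sum_insert (by simp [Prod.ext_iff] <;> omega),
      Finset.sum_singleton]

lemma count_formula' (c : ℤ × ℤ → Bool) (a b : ℤ) :
    sqActCount c (a, b) =
      (if c (a + 1, b) = true then 1 else 0) +
      ((if c (a - 1, b) = true then 1 else 0) +
      ((if c (a, b + 1) = true then 1 else 0) +
      (if c (a, b - 1) = true then 1 else 0))) :=
  count_formula c (a, b)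

lemma count_le (c : ℤ × ℤ → Bool) (p : ℤ × ℤ) : sqActCount c p ≤ 4 := by
  rw [count_formula]; split_ifs <;> omega

lemma F_true_iff (c : ℤ × ℤ → Bool) (p : ℤ × ℤ) :
    F c p = true ↔ (c p = true ∨ 2 ≤ sqActCount c p) := by
  have h4 := count_le c p
  simp only [F, ruleS, Bool.or_eq_true, decide_eq_true_eq,
    Finset.mem_insert, Finset.mem_singleton]
  constructor
  · rintro (h | h)
    · exact Or.inl h
    · exact Or.inr (by omega)
  · rintro (h | h)
    · exact Or.inl h
    · exact Or.inr (by omega)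

def Le (c d : ℤ × ℤ → Bool) : Prop := ∀ p, c p = true → d p = true

lemma count_mono {c d : ℤ × ℤ → Bool} (h : Le c d) (p : ℤ × ℤ) :
    sqActCount c p ≤ sqActCount d p := by
  have key : ∀ q, (if c q = true then 1 else 0) ≤ (if d q = true then (1 : ℕ) else 0) := by
    intro q
    by_cases hc : c q = true
    · simp [hc, h q hc]
    · simp [hc]
  rw [count_formula, count_formula]
  exact add_le_add (key _) (add_le_add (key _) (add_le_add (key _) (key _)))

lemma F_mono {c d : ℤ × ℤ → Bool} (h : Le c d) : Le (F c) (F d) := by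
  intro p hp
  rw [F_true_iff] at hp ⊢
  rcases hp with hp | hp
  · exact Or.inl (h p hp)
  · exact Or.inr (le_trans hp (count_mono h p))

lemma F_freeze (c : ℤ × ℤ → Bool) : Le c (F c) := by
  intro p hp; rw [F_true_iff]; exact Or.inl hp

lemma iter_mono {c d : ℤ × ℤ → Bool} (h : Le c d) (t : ℕ) :
    Le (F^[t] c) (F^[t] d) := by
  induction t with
  | zero => exact h
  | succ t ih =>
    rw [Function.iterate_succ_apply', Function.iterate_succ_apply']
    exact F_mono ih

lemma iter_freeze (c : ℤ × ℤ → Bool) (t : ℕ) : Le c (F^[t] c) := by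
  induction t with
  | zero => exact fun p hp => hp
  | succ t ih =>
    rw [Function.iterate_succ_apply']
    exact fun p hp => F_freeze _ p (ih p hp)

lemma time_mono (c : ℤ × ℤ → Bool) {s t : ℕ} (hst : s ≤ t) (p : ℤ × ℤ)
    (hp : F^[s] c p = true) : F^[t] c p = true := by
  obtain ⟨k, rfl⟩ := Nat.exists_eq_add_of_le hst
  rw [Nat.add_comm, Function.iterate_add_apply]
  exact iter_freeze _ k p hp

lemma locality : ∀ (t : ℕ) (c d : ℤ × ℤ → Bool) (u : ℤ × ℤ),
    (∀ p : ℤ × ℤ, (p.1 - u.1).natAbs + (p.2 - u.2).natAbs ≤ t → c p = d p) →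
    F^[t] c u = F^[t] d u := by
  intro t
  induction t with
  | zero => intro c d u h; exact h u (by omega)
  | succ t ih =>
    intro c d u h
    rw [Function.iterate_succ_apply, Function.iterate_succ_apply]
    apply ih
    intro p hp
    have hq : ∀ q : ℤ × ℤ, (q.1 - p.1).natAbs + (q.2 - p.2).natAbs ≤ 1 → c q = d q := by
      intro q hq1
      exact h q (by omega)
    have hcp := hq p (by omega)
    have hcount : sqActCount c p = sqActCount d p := by
      rw [count_formula, count_formula,
        hq (p.1 + 1, p.2) (by simp <;> omega), hq (p.1 - 1, p.2) (by simp <;> omega),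
        hq (p.1, p.2 + 1) (by simp <;> omega), hq (p.1, p.2 - 1) (by simp <;> omega)]
    simp only [F, ruleS, hcp, hcount]

lemma mod_add (a b : ℤ) : (a % b + 1) % b = (a + 1) % b := by
  rw [Int.add_emod a 1 b, Int.add_emod (a % b) 1 b, Int.emod_emod_of_dvd a dvd_rfl]

lemma mod_sub (a b : ℤ) : (a % b - 1) % b = (a - 1) % b := by
  rw [Int.sub_emod a 1 b, Int.sub_emod (a % b) 1 b, Int.emod_emod_of_dvd a dvd_rfl]

def Per (N : ℤ) (c : ℤ × ℤ → Bool) : Prop :=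
  ∀ a b : ℤ, c (a, b) = c (a % N, b % N)

lemma count_per {N : ℤ} {c : ℤ × ℤ → Bool} (h : Per N c) (a b : ℤ) :
    sqActCount c (a, b) = sqActCount c (a % N, b % N) := by
  rw [count_formula' c a b, count_formula' c (a % N) (b % N),
      h (a + 1) b, h (a - 1) b, h a (b + 1), h a (b - 1),
      h (a % N + 1) (b % N), h (a % N - 1) (b % N),
      h (a % N) (b % N + 1), h (a % N) (b % N - 1),
      mod_add a N, mod_sub a N, mod_add b N, mod_sub b N,
      Int.emod_emod_of_dvd a dvd_rfl, Int.emod_emod_of_dvd b dvd_rfl]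

lemma Per_step {N : ℤ} {c : ℤ × ℤ → Bool} (h : Per N c) : Per N (F c) := by
  intro a b
  simp only [F, ruleS]
  rw [h a b, count_per h a b]

lemma Per_cPer (n : ℕ) (x : ℤ × ℤ → Bool) : Per (n : ℤ) (cPer n x) := by
  intro a b
  simp only [cPer]
  rw [Int.emod_emod_of_dvd a dvd_rfl, Int.emod_emod_of_dvd b dvd_rfl]

lemma Per_iter {N : ℤ} {c : ℤ × ℤ → Bool} (h : Per N c) (t : ℕ) : Per N (F^[t] c) := by
  induction t with
  | zero => exact h
  | succ t ih => rw [Function.iterate_succ_apply']; exact Per_step ih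

/-- the active set in the fundamental domain at time `t` -/
noncomputable def A (n : ℕ) (x : ℤ × ℤ → Bool) (t : ℕ) : Finset (ℤ × ℤ) :=
  ((Finset.Ico (0 : ℤ) (n : ℤ)) ×ˢ (Finset.Ico (0 : ℤ) (n : ℤ))).filter
    (fun p => F^[t] (cPer n x) p = true)

lemma A_mono (n : ℕ) (x : ℤ × ℤ → Bool) (t : ℕ) : A n x t ⊆ A n x (t + 1) := by
  intro p hp
  rw [A, Finset.mem_filter] at hp ⊢
  refine ⟨hp.1, ?_⟩
  rw [Function.iterate_succ_apply']
  exact F_freeze _ p hp.2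

lemma A_card (n : ℕ) (x : ℤ × ℤ → Bool) (t : ℕ) : (A n x t).card ≤ n * n := by
  calc (A n x t).card ≤ _ := Finset.card_filter_le _ _
  _ = n * n := by rw [Finset.card_product, Int.card_Ico]; simp

lemma A_eq_fix (n : ℕ) (hn : 0 < n) (x : ℤ × ℤ → Bool) (T : ℕ)
    (hA : A n x T = A n x (T + 1)) :
    F^[T + 1] (cPer n x) = F^[T] (cPer n x) := by
  funext p
  have hNpos : (0 : ℤ) < (n : ℤ) := by exact_mod_cast hn
  have hPer1 := Per_iter (Per_cPer n x) (T + 1)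
  have hPer0 := Per_iter (Per_cPer n x) T
  have h1 := hPer1 p.1 p.2
  have h0 := hPer0 p.1 p.2
  rw [Prod.mk.eta] at h1 h0
  rw [h1, h0]
  set q : ℤ × ℤ := (p.1 % (n : ℤ), p.2 % (n : ℤ)) with hq
  have hqmem : q ∈ (Finset.Ico (0 : ℤ) (n : ℤ)) ×ˢ (Finset.Ico (0 : ℤ) (n : ℤ)) := by
    simp only [hq, Finset.mem_product, Finset.mem_Ico]
    exact ⟨⟨Int.emod_nonneg _ (by omega), Int.emod_lt_of_pos _ hNpos⟩,
      ⟨Int.emod_nonneg _ (by omega), Int.emod_lt_of_pos _ hNpos⟩⟩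
  by_cases hval : F^[T + 1] (cPer n x) q = true
  · have hmem : q ∈ A n x (T + 1) := Finset.mem_filter.mpr ⟨hqmem, hval⟩
    rw [← hA] at hmem
    have := (Finset.mem_filter.mp hmem).2
    rw [hval, this]
  · have hval0 : F^[T] (cPer n x) q ≠ true := by
      intro h
      exact hval (by
        rw [Function.iterate_succ_apply']
        exact F_freeze _ q h)
    simp only [Bool.not_eq_true] at hval hval0
    rw [hval, hval0]

lemma exists_fix (n : ℕ) (hn : 0 < n) (x : ℤ × ℤ → Bool) :
    ∃ T ≤ n * n, F^[T + 1] (cPer n x) = F^[T] (cPer n x) := by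
  by_contra hcon
  push_neg at hcon
  have hstrict : ∀ T ≤ n * n, (A n x T).card < (A n x (T + 1)).card := by
    intro T hT
    apply Finset.card_lt_card
    refine ⟨A_mono n x T, fun hsub => ?_⟩
    exact hcon T hT (A_eq_fix n hn x T
      (Finset.Subset.antisymm (A_mono n x T) hsub))
  have hgrow : ∀ t, t ≤ n * n + 1 → t ≤ (A n x t).card := by
    intro t
    induction t with
    | zero => omega
    | succ t ih =>
      intro ht
      have h1 := ih (by omega)
      have h2 := hstrict t (by omega)
      omega
  have := hgrow (n * n + 1) le_rfl
  have := A_card n x (n * n + 1)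
  omega

lemma key_mod (N a : ℤ) :
    ((a + (N ^ 2 + N)) % (2 * N ^ 2 + 3 * N) - (N ^ 2 + N)) % N = a % N := by
  have hdvd : N ∣ 2 * N ^ 2 + 3 * N := ⟨2 * N + 3, by ring⟩
  rw [Int.sub_emod, Int.emod_emod_of_dvd _ hdvd, ← Int.sub_emod, add_sub_cancel_right]

lemma Dconf_le_cPer (n : ℕ) (x : ℤ × ℤ → Bool) : Le (Dconf n x) (cPer n x) := by
  intro p h
  simp only [Dconf] at h
  split_ifs at h with hcond
  rw [cPer, ← key_mod (n : ℤ) p.1, ← key_mod (n : ℤ) p.2]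
  exact h

lemma Dconf_agree (n : ℕ) (hn : 0 < n) (x : ℤ × ℤ → Bool) (p : ℤ × ℤ)
    (h1 : -((n : ℤ)) ^ 2 ≤ p.1) (h2 : p.1 < (n : ℤ) ^ 2 + n)
    (h3 : -((n : ℤ)) ^ 2 ≤ p.2) (h4 : p.2 < (n : ℤ) ^ 2 + n) :
    Dconf n x p = cPer n x p := by
  have hN : (0 : ℤ) < (n : ℤ) := by exact_mod_cast hn
  have e1 : (p.1 + ((n : ℤ) ^ 2 + n)) % (2 * (n : ℤ) ^ 2 + 3 * n) = p.1 + ((n : ℤ) ^ 2 + n) :=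
    Int.emod_eq_of_lt (by linarith) (by linarith)
  have e2 : (p.2 + ((n : ℤ) ^ 2 + n)) % (2 * (n : ℤ) ^ 2 + 3 * n) = p.2 + ((n : ℤ) ^ 2 + n) :=
    Int.emod_eq_of_lt (by linarith) (by linarith)
  simp only [Dconf, e1, e2, add_sub_cancel_right]
  rw [if_pos ⟨h1, h2, h3, h4⟩]
  rfl

end S11

/-- square grid under rule 234, `x` a finite `n × n`
configuration and `u ∈ [n] × [n]` with `x_u = 0`. Then `u` is stable for the
periodic configuration `c(x)` iff `u` (identified with its copy inside the
central tiling of `D(x)`) is stable for the periodic configuration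
`D(c) = c(D(x))`. -/
theorem stmt11 (n : ℕ) (hn : 0 < n) (x : ℤ × ℤ → Bool) (u : ℤ × ℤ)
    (hu1 : 0 ≤ u.1) (hu1' : u.1 < n) (hu2 : 0 ≤ u.2) (hu2' : u.2 < n)
    (hxu : x u = false) :
    isStable (ruleS {2, 3, 4}) (cPer n x) u ↔
      isStable (ruleS {2, 3, 4}) (Dconf n x) u := by
  have hN : (0 : ℤ) < (n : ℤ) := by exact_mod_cast hn
  have hsq : (0 : ℤ) ≤ (n : ℤ) ^ 2 := sq_nonneg _
  have hcu : cPer n x u = false := by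
    simp only [cPer]
    rw [Int.emod_eq_of_lt hu1 hu1', Int.emod_eq_of_lt hu2 hu2', Prod.mk.eta, hxu]
  have hDu : Dconf n x u = false := by
    rw [S11.Dconf_agree n hn x u (by linarith) (by linarith) (by linarith) (by linarith), hcu]
  constructor
  · rintro ⟨-, hstab⟩
    refine ⟨hDu, fun t => ?_⟩
    cases hb : (ruleS {2, 3, 4})^[t] (Dconf n x) u with
    | false => rfl
    | true =>
      have h := S11.iter_mono (S11.Dconf_le_cPer n x) t u hb
      rw [hstab t] at h
      exact absurd h (by simp)
  · rintro ⟨-, hstab⟩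
    refine ⟨hcu, fun t => ?_⟩
    by_contra hb
    rw [Bool.not_eq_false] at hb
    have hnn : S11.F^[n * n] (cPer n x) u = true := by
      obtain ⟨T, hT, hfix⟩ := S11.exists_fix n hn x
      rcases le_or_gt t (n * n) with h | h
      · exact S11.time_mono _ h u hb
      · have hfixs : ∀ s, S11.F^[s + T] (cPer n x) = S11.F^[T] (cPer n x) := by
          intro s
          rw [Function.iterate_add_apply]
          exact Function.iterate_fixed
            ((Function.iterate_succ_apply' S11.F T _).symm.trans hfix) s
        have ht' : t = (t - T) + T := by omega
        rw [ht', hfixs] at hb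
        exact S11.time_mono _ hT u hb
    have hloc : S11.F^[n * n] (Dconf n x) u = S11.F^[n * n] (cPer n x) u := by
      apply S11.locality
      intro p hp
      set k := n * n with hk
      have hk2 : ((n : ℤ)) ^ 2 = (k : ℤ) := by rw [hk]; push_cast; ring
      apply S11.Dconf_agree n hn x p
      · rw [hk2]; omega
      · rw [hk2]; omega
      · rw [hk2]; omega
      · rw [hk2]; omega
    rw [hnn] at hloc
    exact absurd (hstab (n * n)) (by rw [hloc]; simp)
end

section
/- In the square grid under rule 234: let x be a finite n×n configuration, D(x) and D(c) as defined, Z the set of inactive cells of D(x), G[Z] the graph on Z with von Neumann adjacency, and B the width-n inactive border of D(x). If a cell u of the central tiling (u ∈ [n]×[n]) is stable for D(c), then there exist three paths in G[Z] connecting u to cells of the border B, pairwise intersecting only in u, and all of whose cells are stable for D(c). -/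
/-- The cell `p` belongs to the `m × m` array on which `D(x)` is defined,
`m = 2n² + 3n`, realized as the coordinate range `[-n²-n, n²+2n)²`. -/
def inArray (n : ℕ) (p : ℤ × ℤ) : Prop :=
  -((n : ℤ) ^ 2 + n) ≤ p.1 ∧ p.1 < (n : ℤ) ^ 2 + 2 * n ∧
  -((n : ℤ) ^ 2 + n) ≤ p.2 ∧ p.2 < (n : ℤ) ^ 2 + 2 * n

/-- The cell `p` belongs to the interior (central tiled block) of `D(x)`. -/
def inInterior (n : ℕ) (p : ℤ × ℤ) : Prop :=
  -((n : ℤ) ^ 2) ≤ p.1 ∧ p.1 < (n : ℤ) ^ 2 + n ∧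
  -((n : ℤ) ^ 2) ≤ p.2 ∧ p.2 < (n : ℤ) ^ 2 + n

/-- `Z`: the set of cells of the `m × m` array that are inactive in `D(x)`. -/
def Zset (n : ℕ) (x : ℤ × ℤ → Bool) : Set (ℤ × ℤ) :=
  {p | inArray n p ∧ Dconf n x p = false}

/-- `B`: the width-`n` inactive border of `D(x)`. -/
def Bset (n : ℕ) : Set (ℤ × ℤ) :=
  {p | inArray n p ∧ ¬ inInterior n p}

/-- The graph on a set `Z` of cells with von Neumann adjacency (cells outside
`Z` are isolated vertices). -/
def sqGraphOn (Z : Set (ℤ × ℤ)) : SimpleGraph (ℤ × ℤ) where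
  Adj p q := p ≠ q ∧ p ∈ Z ∧ q ∈ Z ∧ (q ∈ sqNbrs p ∨ p ∈ sqNbrs q)
  symm := ⟨fun p q h => ⟨h.1.symm, h.2.2.1, h.2.1, h.2.2.2.symm⟩⟩
  loopless := ⟨fun p h => h.1 rfl⟩

open SimpleGraph

section Freezing

variable {I : Finset ℕ} {c : ℤ × ℤ → Bool} {p q₁ q₂ : ℤ × ℤ}

lemma isStable_iff_forall {F : (ℤ × ℤ → Bool) → (ℤ × ℤ → Bool)} :
    isStable F c p ↔ ∀ t, F^[t] c p = false :=
  ⟨fun h => h.2, fun h => ⟨h 0, h⟩⟩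

lemma ruleS_iterate_eq_true_of_le {s t : ℕ} (hst : s ≤ t) (h : (ruleS I)^[s] c p = true) :
    (ruleS I)^[t] c p = true := by
  induction t, hst using Nat.le_induction with
  | base => exact h
  | succ t _ ih => simp [Function.iterate_succ_apply', ruleS, ih]

lemma ruleS_eq_true_of_two_active (hI : {2, 3, 4} ⊆ I) (h₁ : q₁ ∈ sqNbrs p)
    (h₂ : q₂ ∈ sqNbrs p) (hne : q₁ ≠ q₂) (a₁ : c q₁ = true) (a₂ : c q₂ = true) :
    ruleS I c p = true := by
  have hpair : {q₁, q₂} ⊆ (sqNbrs p).filter (fun q => c q = true) := by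
    simp [Finset.insert_subset_iff, h₁, h₂, a₁, a₂]
  have hlo : 2 ≤ sqActCount c p := Finset.card_pair hne ▸ Finset.card_le_card hpair
  have hhi : sqActCount c p ≤ 4 :=
    (Finset.card_filter_le _ _).trans Finset.card_le_four
  have hmem : sqActCount c p ∈ ({2, 3, 4} : Finset ℕ) := by
    simp only [Finset.mem_insert, Finset.mem_singleton]; omega
  simp [ruleS, hI hmem]

lemma isStable_or_isStable_of_mem_sqNbrs (hI : {2, 3, 4} ⊆ I) (hp : isStable (ruleS I) c p)
    (h₁ : q₁ ∈ sqNbrs p) (h₂ : q₂ ∈ sqNbrs p) (hne : q₁ ≠ q₂) :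
    isStable (ruleS I) c q₁ ∨ isStable (ruleS I) c q₂ := by
  by_contra! h
  simp only [isStable_iff_forall, not_forall, Bool.not_eq_false] at h
  obtain ⟨⟨t₁, ht₁⟩, ⟨t₂, ht₂⟩⟩ := h
  have hact := ruleS_eq_true_of_two_active (c := (ruleS I)^[max t₁ t₂] c) hI h₁ h₂ hne
    (ruleS_iterate_eq_true_of_le (le_max_left t₁ t₂) ht₁)
    (ruleS_iterate_eq_true_of_le (le_max_right t₁ t₂) ht₂)
  rw [← Function.iterate_succ_apply' (ruleS I), hp.2] at hact
  exact Bool.false_ne_true hact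

end Freezing

section Geometry

-- `sqDir (j + 1)` is `sqDir j` turned a quarter counterclockwise (`Fin 4` addition wraps around).
def sqDir : Fin 4 → ℤ × ℤ := ![(1, 0), (0, 1), (-1, 0), (0, -1)]

def sqDot (a b : ℤ × ℤ) : ℤ := a.1 * b.1 + a.2 * b.2

def quadrant (p : ℤ × ℤ) (j : Fin 4) : Set (ℤ × ℤ) :=
  {r | 0 ≤ sqDot (r - p) (sqDir j) ∧ 0 ≤ sqDot (r - p) (sqDir (j + 1))}

variable {n : ℕ} {p : ℤ × ℤ} {i j k : Fin 4}

lemma add_sqDir_mem_sqNbrs (p : ℤ × ℤ) (j : Fin 4) : p + sqDir j ∈ sqNbrs p := by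
  fin_cases j <;> simp [sqDir, sqNbrs, Prod.ext_iff, sub_eq_add_neg]

lemma add_sqDir_ne_self (p : ℤ × ℤ) (j : Fin 4) : p + sqDir j ≠ p := by
  fin_cases j <;> simp [sqDir, Prod.ext_iff]

lemma sqDir_injective : Function.Injective sqDir := by
  decide

lemma sqGraphOn_adj_add_sqDir {Z : Set (ℤ × ℤ)} (hp : p ∈ Z) (hq : p + sqDir j ∈ Z) :
    (sqGraphOn Z).Adj p (p + sqDir j) :=
  ⟨(add_sqDir_ne_self p j).symm, hp, hq, Or.inl (add_sqDir_mem_sqNbrs p j)⟩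

lemma inArray_of_inInterior (hp : inInterior n p) : inArray n p := by
  obtain ⟨h₁, h₂, h₃, h₄⟩ := hp
  refine ⟨?_, ?_, ?_, ?_⟩ <;> omega

lemma inArray_add_sqDir_of_inInterior (hp : inInterior n p) (j : Fin 4) :
    inArray n (p + sqDir j) := by
  obtain ⟨h₁, h₂, h₃, h₄⟩ := hp
  have hn : (0 : ℤ) < n := by nlinarith
  fin_cases j <;> simp only [inArray] <;> simp [sqDir] <;> omega

lemma sqDot_sqDir_lt_of_inInterior (hp : inInterior n p) (j : Fin 4) :
    sqDot p (sqDir j) < (n : ℤ) ^ 2 + n := by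
  obtain ⟨h₁, h₂, h₃, h₄⟩ := hp
  have hn : (0 : ℤ) < n := by nlinarith
  fin_cases j <;> simp [sqDot, sqDir] <;> omega

lemma sqDot_add_sqDir (hi : i = j ∨ i = j + 1) (p : ℤ × ℤ) :
    sqDot (p + sqDir i) (sqDir j) + sqDot (p + sqDir i) (sqDir (j + 1)) =
      sqDot p (sqDir j) + sqDot p (sqDir (j + 1)) + 1 := by
  fin_cases i <;> fin_cases j <;> simp at hi <;> simp [sqDot, sqDir] <;> ring

lemma self_mem_quadrant (p : ℤ × ℤ) (j : Fin 4) : p ∈ quadrant p j := by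
  simp [quadrant, sqDot]

lemma notMem_quadrant_add_sqDir (hi : i = j ∨ i = j + 1) (p : ℤ × ℤ) :
    p ∉ quadrant (p + sqDir i) j := by
  fin_cases i <;> fin_cases j <;> simp at hi <;> simp [quadrant, sqDot, sqDir]

lemma quadrant_add_sqDir_subset (hi : i = j ∨ i = j + 1) (p : ℤ × ℤ) :
    quadrant (p + sqDir i) j ⊆ quadrant p j := by
  rintro r ⟨h₁, h₂⟩
  fin_cases i <;> fin_cases j <;> simp at hi <;> simp_all [quadrant, sqDot, sqDir] <;> omega

/-- The quadrants `quadrant (u + sqDir j) j` for the four `j` tile the plane minus `u` like a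
pinwheel. -/
lemma disjoint_quadrant_add_sqDir (u : ℤ × ℤ) (hjk : j ≠ k) :
    Disjoint (quadrant (u + sqDir j) j) (quadrant (u + sqDir k) k) := by
  rw [Set.disjoint_left]
  rintro r ⟨h₁, h₂⟩ ⟨h₃, h₄⟩
  fin_cases j <;> fin_cases k <;> simp_all [sqDot, sqDir] <;> omega

end Geometry

section Paths

variable {n : ℕ} {Z S : Set (ℤ × ℤ)} {j : Fin 4}

/-- A monotone staircase: `sqDot · (sqDir j) + sqDot · (sqDir (j + 1))` grows by one at each
step and is bounded on the interior, so the walk reaches the border. -/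
lemma exists_isPath_to_Bset_within_quadrant (hSZ : ∀ p ∈ S, inArray n p → p ∈ Z)
    (hS : ∀ p ∈ S, p + sqDir j ∈ S ∨ p + sqDir (j + 1) ∈ S) {p : ℤ × ℤ} (hp : p ∈ S)
    (hpA : inArray n p) :
    ∃ b ∈ Bset n, ∃ w : (sqGraphOn Z).Walk p b, w.IsPath ∧
      ∀ r ∈ w.support, r ∈ S ∧ r ∈ quadrant p j := by
  obtain ⟨k, hk⟩ : ∃ k : ℕ,
      2 * ((n : ℤ) ^ 2 + n) ≤ sqDot p (sqDir j) + sqDot p (sqDir (j + 1)) + k :=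
    ⟨(2 * ((n : ℤ) ^ 2 + n) - sqDot p (sqDir j) - sqDot p (sqDir (j + 1))).toNat, by omega⟩
  induction k using Nat.strong_induction_on generalizing p with
  | _ k ih =>
    by_cases hpI : inInterior n p
    swap
    · refine ⟨p, ⟨hpA, hpI⟩, Walk.nil, Walk.IsPath.nil, ?_⟩
      simpa using ⟨hp, self_mem_quadrant p j⟩
    obtain ⟨i, hi, hq⟩ : ∃ i, (i = j ∨ i = j + 1) ∧ p + sqDir i ∈ S := by
      rcases hS p hp with h | h
      exacts [⟨j, Or.inl rfl, h⟩, ⟨j + 1, Or.inr rfl, h⟩]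
    have hqA := inArray_add_sqDir_of_inInterior hpI i
    have hlt₁ := sqDot_sqDir_lt_of_inInterior hpI j
    have hlt₂ := sqDot_sqDir_lt_of_inInterior hpI (j + 1)
    have hstep := sqDot_add_sqDir hi p
    obtain ⟨b, hb, w, hw, hwS⟩ := ih (k - 1) (by omega) hq hqA (by omega)
    refine ⟨b, hb, Walk.cons (sqGraphOn_adj_add_sqDir (hSZ p hp (inArray_of_inInterior hpI))
      (hSZ _ hq hqA)) w, hw.cons fun hpw => notMem_quadrant_add_sqDir hi p (hwS p hpw).2, ?_⟩
    simp only [Walk.support_cons, List.forall_mem_cons]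
    exact ⟨⟨hp, self_mem_quadrant p j⟩,
      fun r hr => ⟨(hwS r hr).1, quadrant_add_sqDir_subset hi p (hwS r hr).2⟩⟩

lemma exists_isPath_to_Bset_through_add_sqDir (hSZ : ∀ p ∈ S, inArray n p → p ∈ Z)
    (hS : ∀ p ∈ S, p + sqDir j ∈ S ∨ p + sqDir (j + 1) ∈ S) {u : ℤ × ℤ} (hu : u ∈ S)
    (huI : inInterior n u) (hj : u + sqDir j ∈ S) :
    ∃ b ∈ Bset n, ∃ w : (sqGraphOn Z).Walk u b, w.IsPath ∧ (∀ r ∈ w.support, r ∈ S) ∧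
      ∀ r ∈ w.support, r ≠ u → r ∈ quadrant (u + sqDir j) j := by
  have hjA := inArray_add_sqDir_of_inInterior huI j
  obtain ⟨b, hb, w, hw, hwS⟩ := exists_isPath_to_Bset_within_quadrant hSZ hS hj hjA
  refine ⟨b, hb, Walk.cons (sqGraphOn_adj_add_sqDir (hSZ u hu (inArray_of_inInterior huI))
    (hSZ _ hj hjA)) w, hw.cons fun huw => notMem_quadrant_add_sqDir (.inl rfl) u (hwS u huw).2,
    ?_, ?_⟩
  · simpa only [Walk.support_cons, List.forall_mem_cons] using ⟨hu, fun r hr => (hwS r hr).1⟩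
  · simp only [Walk.support_cons, List.forall_mem_cons]
    exact ⟨fun h => (h rfl).elim, fun r hr _ => (hwS r hr).2⟩

lemma eq_of_mem_support_of_mem_support {u b b' : ℤ × ℤ} {k : Fin 4}
    {w : (sqGraphOn Z).Walk u b} {w' : (sqGraphOn Z).Walk u b'}
    (hw : ∀ r ∈ w.support, r ≠ u → r ∈ quadrant (u + sqDir j) j)
    (hw' : ∀ r ∈ w'.support, r ≠ u → r ∈ quadrant (u + sqDir k) k) (hjk : j ≠ k) :
    ∀ r, r ∈ w.support → r ∈ w'.support → r = u := by
  intro r hr hr'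
  by_contra hru
  exact Set.disjoint_left.mp (disjoint_quadrant_add_sqDir u hjk) (hw r hr hru) (hw' r hr' hru)

lemma exists_three_add_sqDir_mem {u : ℤ × ℤ}
    (hS : ∀ i j : Fin 4, i ≠ j → u + sqDir i ∈ S ∨ u + sqDir j ∈ S) :
    ∃ j₁ j₂ j₃ : Fin 4, j₁ ≠ j₂ ∧ j₁ ≠ j₃ ∧ j₂ ≠ j₃ ∧
      u + sqDir j₁ ∈ S ∧ u + sqDir j₂ ∈ S ∧ u + sqDir j₃ ∈ S := by
  obtain ⟨i, hi⟩ : ∃ i, ∀ j ≠ i, u + sqDir j ∈ S := by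
    by_cases h : ∀ i, u + sqDir i ∈ S
    · exact ⟨0, fun j _ => h j⟩
    · obtain ⟨i, hi⟩ := not_forall.mp h
      exact ⟨i, fun j hj => (hS j i hj).resolve_right hi⟩
  refine ⟨i + 1, i + 2, i + 3, ?_, ?_, ?_, hi _ ?_, hi _ ?_, hi _ ?_⟩ <;> fin_cases i <;> decide

end Paths

theorem stmt12_general (n : ℕ) (x : ℤ × ℤ → Bool) (u : ℤ × ℤ)
    (hu1 : 0 ≤ u.1) (hu1' : u.1 < n) (hu2 : 0 ≤ u.2) (hu2' : u.2 < n)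
    (hstab : isStable (ruleS {2, 3, 4}) (Dconf n x) u) :
    ∃ (b1 b2 b3 : ℤ × ℤ), b1 ∈ Bset n ∧ b2 ∈ Bset n ∧ b3 ∈ Bset n ∧
      ∃ (p1 : (sqGraphOn (Zset n x)).Walk u b1)
        (p2 : (sqGraphOn (Zset n x)).Walk u b2)
        (p3 : (sqGraphOn (Zset n x)).Walk u b3),
        p1.IsPath ∧ p2.IsPath ∧ p3.IsPath ∧
        (∀ w ∈ p1.support, isStable (ruleS {2, 3, 4}) (Dconf n x) w) ∧
        (∀ w ∈ p2.support, isStable (ruleS {2, 3, 4}) (Dconf n x) w) ∧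
        (∀ w ∈ p3.support, isStable (ruleS {2, 3, 4}) (Dconf n x) w) ∧
        (∀ w, w ∈ p1.support → w ∈ p2.support → w = u) ∧
        (∀ w, w ∈ p1.support → w ∈ p3.support → w = u) ∧
        (∀ w, w ∈ p2.support → w ∈ p3.support → w = u) := by
  set S := {p | isStable (ruleS {2, 3, 4}) (Dconf n x) p}
  have hSZ : ∀ p ∈ S, inArray n p → p ∈ Zset n x := fun p hp hpA => ⟨hpA, hp.1⟩
  have hS : ∀ p ∈ S, ∀ i j : Fin 4, i ≠ j → p + sqDir i ∈ S ∨ p + sqDir j ∈ S :=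
    fun p hp i j hij => isStable_or_isStable_of_mem_sqNbrs subset_rfl hp
      (add_sqDir_mem_sqNbrs p i) (add_sqDir_mem_sqNbrs p j)
      ((add_right_injective p).ne (sqDir_injective.ne hij))
  have huI : inInterior n u := ⟨by nlinarith, by nlinarith, by nlinarith, by nlinarith⟩
  have arm := fun j (hj : u + sqDir j ∈ S) =>
    exists_isPath_to_Bset_through_add_sqDir hSZ (fun p hp => hS p hp j (j + 1) (by simp))
      hstab huI hj
  obtain ⟨j₁, j₂, j₃, h₁₂, h₁₃, h₂₃, hj₁, hj₂, hj₃⟩ := exists_three_add_sqDir_mem (hS u hstab)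
  obtain ⟨b₁, hb₁, w₁, hw₁, hS₁, hQ₁⟩ := arm j₁ hj₁
  obtain ⟨b₂, hb₂, w₂, hw₂, hS₂, hQ₂⟩ := arm j₂ hj₂
  obtain ⟨b₃, hb₃, w₃, hw₃, hS₃, hQ₃⟩ := arm j₃ hj₃
  exact ⟨b₁, b₂, b₃, hb₁, hb₂, hb₃, w₁, w₂, w₃, hw₁, hw₂, hw₃, hS₁, hS₂, hS₃,
    eq_of_mem_support_of_mem_support hQ₁ hQ₂ h₁₂, eq_of_mem_support_of_mem_support hQ₁ hQ₃ h₁₃,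
    eq_of_mem_support_of_mem_support hQ₂ hQ₃ h₂₃⟩

/-- square grid under rule 234. If a cell `u` of the central
copy of `x` (`u ∈ [n] × [n]`) is stable for `D(c)`, then there are three
paths in `G[Z]` connecting `u` to cells of the border `B`, pairwise
intersecting only in `u`, all of whose cells are stable for `D(c)`. -/
theorem stmt12 (n : ℕ) (hn : 0 < n) (x : ℤ × ℤ → Bool) (u : ℤ × ℤ)
    (hu1 : 0 ≤ u.1) (hu1' : u.1 < n) (hu2 : 0 ≤ u.2) (hu2' : u.2 < n)
    (hstab : isStable (ruleS {2, 3, 4}) (Dconf n x) u) :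
    ∃ (b1 b2 b3 : ℤ × ℤ), b1 ∈ Bset n ∧ b2 ∈ Bset n ∧ b3 ∈ Bset n ∧
      ∃ (p1 : (sqGraphOn (Zset n x)).Walk u b1)
        (p2 : (sqGraphOn (Zset n x)).Walk u b2)
        (p3 : (sqGraphOn (Zset n x)).Walk u b3),
        p1.IsPath ∧ p2.IsPath ∧ p3.IsPath ∧
        (∀ w ∈ p1.support, isStable (ruleS {2, 3, 4}) (Dconf n x) w) ∧
        (∀ w ∈ p2.support, isStable (ruleS {2, 3, 4}) (Dconf n x) w) ∧
        (∀ w ∈ p3.support, isStable (ruleS {2, 3, 4}) (Dconf n x) w) ∧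
        (∀ w, w ∈ p1.support → w ∈ p2.support → w = u) ∧
        (∀ w, w ∈ p1.support → w ∈ p3.support → w = u) ∧
        (∀ w, w ∈ p2.support → w ∈ p3.support → w = u) :=
  stmt12_general n x u hu1 hu1' hu2 hu2' hstab
end

section
/- In the square grid, let F be any one of rule 12, rule 123, rule 124, and let c be a configuration and τ ≥ 2 an integer such that every cell at Manhattan distance strictly less than τ from the origin is inactive in c. Then for every i with 1 ≤ i ≤ τ−1: F^{τ−1−i}(c)_{(i,1)} = 1 if and only if there exists k with i ≤ k ≤ τ−1 such that the cell (k, τ−k) is active in c. -/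
lemma speed_lemma (I : Finset ℕ) (hI0 : 0 ∉ I) (c : ℤ × ℤ → Bool) (τ : ℕ)
    (hball : ∀ p : ℤ × ℤ, p.1.natAbs + p.2.natAbs < τ → c p = false) :
    ∀ s : ℕ, ∀ p : ℤ × ℤ, p.1.natAbs + p.2.natAbs + s < τ → (ruleS I)^[s] c p = false := by
  intro s
  induction s with
  | zero => intro p hp; exact hball p (by omega)
  | succ n ih =>
    intro p hp
    rw [Function.iterate_succ_apply']
    have h1 : (ruleS I)^[n] c p = false := ih p (by omega)
    have hcount : sqActCount ((ruleS I)^[n] c) p = 0 := by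
      unfold sqActCount
      rw [Finset.card_eq_zero, Finset.filter_eq_empty_iff]
      intro q hq
      simp only [sqNbrs, Finset.mem_insert, Finset.mem_singleton] at hq
      have hq' : (ruleS I)^[n] c q = false := by
        apply ih
        rcases hq with rfl | rfl | rfl | rfl <;> simp <;> omega
      simp [hq']
    simp [ruleS, h1, hcount, hI0]

lemma main_lemma (I : Finset ℕ)
    (hI : I = {1, 2} ∨ I = {1, 2, 3} ∨ I = {1, 2, 4})
    (c : ℤ × ℤ → Bool) (τ : ℕ)
    (hball : ∀ p : ℤ × ℤ, p.1.natAbs + p.2.natAbs < τ → c p = false) :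
    ∀ t : ℕ, ∀ x y : ℤ, 1 ≤ x → 1 ≤ y → x + y + (t : ℤ) = (τ : ℤ) →
      ((ruleS I)^[t] c (x, y) = true ↔
        ∃ j : ℤ, x ≤ j ∧ j ≤ x + (t : ℤ) ∧ c (j, (τ : ℤ) - j) = true) := by
  have hI0 : 0 ∉ I := by rcases hI with rfl | rfl | rfl <;> decide
  have hI1 : 1 ∈ I := by rcases hI with rfl | rfl | rfl <;> decide
  have hI2 : 2 ∈ I := by rcases hI with rfl | rfl | rfl <;> decide
  intro t
  induction t with
  | zero =>
    intro x y hx hy hsum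
    have hy' : y = (τ : ℤ) - x := by push_cast at hsum; omega
    subst hy'
    constructor
    · intro h; exact ⟨x, le_refl x, by push_cast; omega, h⟩
    · rintro ⟨j, hj1, hj2, hj3⟩
      have : j = x := by omega
      subst this; exact hj3
  | succ n ih =>
    intro x y hx hy hsum
    have hsum' : x + y + (n : ℤ) + 1 = (τ : ℤ) := by push_cast at hsum; omega
    rw [Function.iterate_succ_apply']
    set d := (ruleS I)^[n] c with hd
    have h0 : d (x, y) = false := by
      apply speed_lemma I hI0 c τ hball; simp; omega
    have h2 : d (x - 1, y) = false := by
      apply speed_lemma I hI0 c τ hball; simp; omega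
    have h3 : d (x, y - 1) = false := by
      apply speed_lemma I hI0 c τ hball; simp; omega
    have key : (ruleS I) d (x, y) = (d (x + 1, y) || d (x, y + 1)) := by
      have hne : ((x : ℤ) + 1, y) ≠ (x, y + 1) := by simp
      unfold ruleS sqActCount sqNbrs
      cases hA : d (x + 1, y) <;> cases hB : d (x, y + 1) <;>
        simp [Finset.filter_insert, hA, hB, h2, h3, h0, hne, hI0, hI1, hI2,
          Finset.filter_singleton]
    rw [key]
    have iha := ih (x + 1) y (by omega) hy (by omega)
    have ihb := ih x (y + 1) hx (by omega) (by omega)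
    constructor
    · intro h
      rcases Bool.or_eq_true_iff.mp h with h' | h'
      · obtain ⟨j, hj1, hj2, hj3⟩ := iha.mp h'
        exact ⟨j, by omega, by omega, hj3⟩
      · obtain ⟨j, hj1, hj2, hj3⟩ := ihb.mp h'
        exact ⟨j, hj1, by omega, hj3⟩
    · rintro ⟨j, hj1, hj2, hj3⟩
      rcases lt_or_ge j (x + 1) with hj | hj
      · have : j ≤ x + (n : ℤ) := by omega
        exact Bool.or_eq_true_iff.mpr (Or.inr (ihb.mpr ⟨j, hj1, this, hj3⟩))
      · have : j ≤ x + 1 + (n : ℤ) := by omega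
        exact Bool.or_eq_true_iff.mpr (Or.inl (iha.mpr ⟨j, hj, this, hj3⟩))

/-- square grid, `F` any of rules 12, 123, 124. If every cell at
Manhattan distance `< τ` from the origin is inactive in `c` (`τ ≥ 2`), then
for `1 ≤ i ≤ τ-1`, the cell `(i,1)` is active at time `τ-1-i` iff some cell
`(k, τ-k)` with `i ≤ k ≤ τ-1` is active in `c`. -/
theorem stmt15 (I : Finset ℕ)
    (hI : I = {1, 2} ∨ I = {1, 2, 3} ∨ I = {1, 2, 4})
    (c : ℤ × ℤ → Bool) (τ : ℕ) (hτ : 2 ≤ τ)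
    (hball : ∀ p : ℤ × ℤ, p.1.natAbs + p.2.natAbs < τ → c p = false) :
    ∀ i : ℕ, 1 ≤ i → i ≤ τ - 1 →
      ((ruleS I)^[τ - 1 - i] c ((i : ℤ), 1) = true ↔
        ∃ k : ℕ, i ≤ k ∧ k ≤ τ - 1 ∧ c ((k : ℤ), (τ : ℤ) - (k : ℤ)) = true) := by
  intro i h1 h2
  rw [main_lemma I hI c τ hball (τ - 1 - i) (i : ℤ) 1 (by exact_mod_cast h1) le_rfl (by omega)]
  constructor
  · rintro ⟨j, hj1, hj2, hj3⟩
    refine ⟨j.toNat, by omega, by omega, ?_⟩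
    have hjt : (j.toNat : ℤ) = j := by omega
    rw [hjt]; exact hj3
  · rintro ⟨k, hk1, hk2, hk3⟩
    exact ⟨(k : ℤ), by omega, by omega, hk3⟩
end
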